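/- arXiv:1703.02330 — 7 statements merged into one kernel-verified Lean document; each statement's English description precedes it below -/
import Mathlib

section
/- Suppose conditions (ND1) and (ND2) hold, P{A>0}=1, the perpetuity X=∑_{k≥1}Π_{k-1}B_k converges a.s. (|X|<∞ a.s.), and let r>0. If P{A≤1}=1, E[e^{rB}]<∞ and E[e^{rB}·1_{{A=1}}]<1, then E[e^{rX}]<∞. -/
/-!
Write `X_n` for the partial sums of the perpetuity, so that `X_{n+1} = B_0 + A_0 X'_n`, where `X'_n`
is built from the shifted sequence and is independent of `(A_0, B_0)`. Since `A_0 ≤ 1` a.s. and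
`E[e^{rB}; A = 1] < 1`, there is `δ < 1` with `β := E[e^{rB}; A > δ] < 1`. For `0 ≤ a ≤ δ` and
`s ≥ 1` one has `e^{ay} ≤ s^δ + s^{δ-1} e^y`, while `e^{ay} ≤ 1 + e^y` for `0 ≤ a ≤ 1`; hence
`E e^{rX_{n+1}} ≤ c + q E e^{rX'_n}` with `q = s^{δ-1} E e^{rB} + β`, which is `< 1` once `s` is large.
By induction over all sequences satisfying the hypotheses, `E e^{rX_n}` stays bounded, and Fatou's
lemma passes the bound to `X`.
-/

open MeasureTheory ProbabilityTheory Filter Finset Topology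
open scoped ENNReal

lemma Real.exp_mul_le_rpow_add_rpow_sub_one_mul_exp {a δ s : ℝ} (ha : 0 ≤ a) (haδ : a ≤ δ)
    (hδ : δ ≤ 1) (hs : 1 ≤ s) (y : ℝ) :
    Real.exp (a * y) ≤ s ^ δ + s ^ (δ - 1) * Real.exp y := by
  have hs0 : 0 < s := one_pos.trans_le hs
  have hrest : 0 ≤ s ^ (δ - 1) * Real.exp y := by positivity
  rcases le_or_gt y 0 with hy | hy
  · have h1 : Real.exp (a * y) ≤ 1 := Real.exp_le_one_iff.2 (mul_nonpos_of_nonneg_of_nonpos ha hy)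
    linarith [Real.one_le_rpow hs (ha.trans haδ)]
  set x := Real.exp y
  have hx : 0 < x := Real.exp_pos y
  have hax : Real.exp (a * y) ≤ x ^ δ := by
    rw [← Real.exp_mul, mul_comm y]
    exact Real.exp_le_exp.2 (mul_le_mul_of_nonneg_right haδ hy.le)
  rcases le_or_gt x s with hxs | hsx
  · linarith [Real.rpow_le_rpow hx.le hxs (ha.trans haδ)]
  · calc Real.exp (a * y) ≤ x ^ (δ - 1) * x := by rwa [← Real.rpow_add_one hx.ne', sub_add_cancel]
      _ ≤ s ^ (δ - 1) * x :=
        mul_le_mul_of_nonneg_right (Real.rpow_le_rpow_of_nonpos hs0 hsx.le (by linarith)) hx.le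
      _ ≤ s ^ δ + s ^ (δ - 1) * x := le_add_of_nonneg_left (by positivity)

lemma exists_rpow_invariant_bound {m β : ℝ≥0∞} (hm : m ≠ ∞) (hβ : β < 1) {δ : ℝ} (hδ : δ < 1) :
    ∃ s, 1 ≤ s ∧ ∃ t : ℝ≥0∞, t ≠ ∞ ∧ 1 ≤ t ∧
      m * (ENNReal.ofReal (s ^ δ) + ENNReal.ofReal (s ^ (δ - 1)) * t) + β * (1 + t) ≤ t := by
  lift m to NNReal using hm
  lift β to NNReal using (hβ.trans ENNReal.one_lt_top).ne
  have hβ1 : (β : ℝ) < 1 := by exact_mod_cast hβ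
  have hdecay : Tendsto (fun s : ℝ => s ^ (δ - 1) * m) atTop (𝓝 0) := by
    simpa [neg_sub] using (tendsto_rpow_neg_atTop (y := 1 - δ) (by linarith)).mul_const (m : ℝ)
  obtain ⟨s, hsm, hs⟩ :=
    ((hdecay.eventually_lt_const (by linarith : (0 : ℝ) < (1 - β) / 2)).and
      (eventually_ge_atTop 1)).exists
  -- with `q := m s^(δ-1) + β ≤ (1 + β) / 2` the goal reads `c + q t ≤ t`, which holds
  -- as soon as `c ≤ (1 - β) / 2 * t`
  set c : ℝ := m * s ^ δ + β
  set t : ℝ := max 1 (2 * c / (1 - β))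
  have hc : c ≤ (1 - β) / 2 * t := by
    rw [show (1 - β) / 2 * t = t * (1 - β) / 2 by ring, le_div_iff₀ two_pos,
      ← div_le_iff₀ (by linarith)]
    exact (le_of_eq (by ring)).trans (le_max_right _ _)
  refine ⟨s, hs, ENNReal.ofReal t, ENNReal.ofReal_ne_top, ?_, ?_⟩
  · exact ENNReal.one_le_ofReal.2 (le_max_left _ _)
  have ht : 0 ≤ t := zero_le_one.trans (le_max_left _ _)
  have hreal : m * (s ^ δ + s ^ (δ - 1) * t) + β * (1 + t) ≤ t := by
    have := mul_le_mul_of_nonneg_right hsm.le ht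
    nlinarith [NNReal.coe_nonneg β]
  have hs0 : 0 ≤ s := zero_le_one.trans hs
  rw [← ENNReal.ofReal_coe_nnreal, ← ENNReal.ofReal_coe_nnreal (p := β), ← ENNReal.ofReal_one,
    ← ENNReal.ofReal_mul (by positivity), ← ENNReal.ofReal_add (by positivity) (by positivity),
    ← ENNReal.ofReal_mul (by positivity), ← ENNReal.ofReal_add zero_le_one ht,
    ← ENNReal.ofReal_mul (by positivity), ← ENNReal.ofReal_add (by positivity) (by positivity)]
  exact ENNReal.ofReal_le_ofReal hreal

lemma MeasureTheory.Measure.exists_lt_measure_setOf_lt_lt {Ω : Type*} [MeasurableSpace Ω]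
    {ν : Measure Ω} [IsFiniteMeasure ν] {f : Ω → ℝ} (hf : Measurable f) {c : ℝ} {x : ℝ≥0∞}
    (h : ν {ω | c ≤ f ω} < x) : ∃ δ < c, ν {ω | δ < f ω} < x := by
  have hlim := tendsto_measure_biInter_gt (μ := ν) (s := fun ε : ℝ ↦ {ω | c - ε < f ω}) (a := 0)
    (fun _ _ ↦ (measurableSet_lt measurable_const hf).nullMeasurableSet)
    (fun i j _ hij ω (hω : c - i < f ω) ↦ show c - j < f ω by linarith)
    ⟨1, one_pos, measure_ne_top _ _⟩
  have hinter : ⋂ ε > (0 : ℝ), {ω | c - ε < f ω} = {ω | c ≤ f ω} := by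
    ext ω
    simp only [Set.mem_iInter, Set.mem_ofPred_eq]
    exact ⟨fun h ↦ le_of_forall_pos_lt_add fun ε hε ↦ by linarith [h ε hε],
      fun h ε hε ↦ by linarith⟩
  rw [hinter] at hlim
  obtain ⟨ε, hεx, hε⟩ := ((hlim.eventually_lt_const h).and self_mem_nhdsWithin).exists
  exact ⟨c - ε, sub_lt_self c hε, hεx⟩

lemma exists_lt_setLIntegral_setOf_lt_lt {Ω : Type*} [MeasurableSpace Ω] {μ : Measure Ω}
    {f : Ω → ℝ} (hf : Measurable f) {c : ℝ} (hfc : ∀ᵐ ω ∂μ, f ω ≤ c) {W : Ω → ℝ≥0∞}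
    (hW : ∫⁻ ω, W ω ∂μ ≠ ∞) {x : ℝ≥0∞} (h : ∫⁻ ω in {ω | f ω = c}, W ω ∂μ < x) :
    ∃ δ < c, ∫⁻ ω in {ω | δ < f ω}, W ω ∂μ < x := by
  have : IsFiniteMeasure (μ.withDensity W) := isFiniteMeasure_withDensity hW
  have hae : {ω | c ≤ f ω} =ᵐ[μ] {ω | f ω = c} :=
    hfc.mono fun ω h ↦ propext ⟨fun h' ↦ le_antisymm h h', fun h' ↦ h'.symm.le⟩
  obtain ⟨δ, hδ, hδx⟩ := Measure.exists_lt_measure_setOf_lt_lt (ν := μ.withDensity W) hf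
    (by rwa [withDensity_apply _ (measurableSet_le measurable_const hf), setLIntegral_congr hae])
  exact ⟨δ, hδ, by rwa [withDensity_apply _ (measurableSet_lt measurable_const hf)] at hδx⟩

lemma MeasureTheory.lintegral_le_of_ae_tendsto {α : Type*} [MeasurableSpace α] {μ : Measure α}
    {f : ℕ → α → ℝ≥0∞} {g : α → ℝ≥0∞} (hf : ∀ n, Measurable (f n))
    (hlim : ∀ᵐ x ∂μ, Tendsto (fun n ↦ f n x) atTop (𝓝 (g x))) {t : ℝ≥0∞}
    (ht : ∀ n, ∫⁻ x, f n x ∂μ ≤ t) : ∫⁻ x, g x ∂μ ≤ t :=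
  calc ∫⁻ x, g x ∂μ = ∫⁻ x, liminf (fun n ↦ f n x) atTop ∂μ :=
        lintegral_congr_ae (hlim.mono fun _ h ↦ h.liminf_eq.symm)
    _ ≤ liminf (fun n ↦ ∫⁻ x, f n x ∂μ) atTop := lintegral_liminf_le hf
    _ ≤ t := liminf_le_of_le ⟨0, by simp⟩ fun _ h ↦ h.exists.elim fun n hn ↦ hn.trans (ht n)

lemma ProbabilityTheory.IdentDistrib.setLIntegral_comp_eq {α β γ : Type*} [MeasurableSpace α]
    [MeasurableSpace β] [MeasurableSpace γ] {μ : Measure α} {ν : Measure β} {f : α → γ} {g : β → γ}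
    (h : IdentDistrib f g μ ν) (hf : Measurable f) (hg : Measurable g) {φ : γ → ℝ≥0∞}
    (hφ : Measurable φ) {S : Set γ} (hS : MeasurableSet S) :
    ∫⁻ x in f ⁻¹' S, φ (f x) ∂μ = ∫⁻ x in g ⁻¹' S, φ (g x) ∂ν := by
  rw [← setLIntegral_map hS hφ hf, h.map_eq, setLIntegral_map hS hφ hg]

noncomputable def perpSum {α : Type*} (A B : ℕ → α → ℝ) (n : ℕ) (ω : α) : ℝ :=
  ∑ k ∈ range n, (∏ i ∈ range k, A i ω) * B k ω

section PerpSum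

variable {α : Type*} (A B : ℕ → α → ℝ)

@[simp]
lemma perpSum_zero : perpSum A B 0 = 0 := by
  ext ω
  simp [perpSum]

lemma perpSum_succ (n : ℕ) (ω : α) :
    perpSum A B (n + 1) ω =
      B 0 ω + A 0 ω * perpSum (fun i ↦ A (i + 1)) (fun i ↦ B (i + 1)) n ω := by
  simp only [perpSum, sum_range_succ', prod_range_succ', prod_range_zero, one_mul, mul_sum]
  rw [add_comm]
  exact congrArg _ (sum_congr rfl fun k _ ↦ by ring)

variable {A B}

lemma measurable_perpSum {_ : MeasurableSpace α} (hA : ∀ i, Measurable (A i))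
    (hB : ∀ i, Measurable (B i)) (n : ℕ) : Measurable (perpSum A B n) :=
  Finset.measurable_sum _ fun k _ ↦ (Finset.measurable_prod _ fun i _ ↦ hA i).mul (hB k)

end PerpSum

lemma indepFun_perpSum_shift {Ω : Type*} [MeasurableSpace Ω] {μ : Measure Ω} {A B : ℕ → Ω → ℝ}
    (hA : ∀ i, Measurable (A i)) (hB : ∀ i, Measurable (B i))
    (hindep : iIndepFun (fun i ω ↦ (A i ω, B i ω)) μ) (n : ℕ) :
    IndepFun (fun ω ↦ (A 0 ω, B 0 ω)) (perpSum (fun i ↦ A (i + 1)) (fun i ↦ B (i + 1)) n) μ := by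
  set M : ℕ → MeasurableSpace Ω :=
    fun i ↦ MeasurableSpace.comap (fun ω ↦ (A i ω, B i ω)) inferInstance
  have hM : ∀ i, M i ≤ ‹MeasurableSpace Ω› := fun i ↦ ((hA i).prodMk (hB i)).comap_le
  have hsplit := indep_iSup_of_disjoint hM hindep.iIndep
    (Set.disjoint_singleton_left.2 (lt_irrefl 0) : Disjoint {0} (Set.Ioi 0))
  rw [IndepFun_iff_Indep]
  refine indep_of_indep_of_le_right (indep_of_indep_of_le_left hsplit ?_) ?_
  · exact le_iSup₂ (f := fun i (_ : i ∈ ({0} : Set ℕ)) ↦ M i) 0 rfl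
  · have hle : ∀ i, M (i + 1) ≤ ⨆ j ∈ Set.Ioi 0, M j :=
      fun i ↦ le_iSup₂ (f := fun j (_ : j ∈ Set.Ioi 0) ↦ M j) (i + 1) i.succ_pos
    refine Measurable.comap_le (measurable_perpSum (fun i ↦ ?_) (fun i ↦ ?_) n)
    · exact (measurable_fst.comp (comap_measurable _)).mono (hle i) le_rfl
    · exact (measurable_snd.comp (comap_measurable _)).mono (hle i) le_rfl

section ExpMoment

variable {Ω : Type*} [MeasurableSpace Ω] {μ : Measure Ω} [IsProbabilityMeasure μ]
  {A B : ℕ → Ω → ℝ} (r : ℝ) {δ s : ℝ}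

lemma lintegral_exp_perpSum_succ_le (hA : ∀ i, Measurable (A i)) (hB : ∀ i, Measurable (B i))
    (hindep : iIndepFun (fun i ω ↦ (A i ω, B i ω)) μ) (hA0 : ∀ᵐ ω ∂μ, 0 ≤ A 0 ω ∧ A 0 ω ≤ 1)
    (hδ : δ ≤ 1) (hs : 1 ≤ s) (n : ℕ) :
    ∫⁻ ω, ENNReal.ofReal (Real.exp (r * perpSum A B (n + 1) ω)) ∂μ ≤
      (∫⁻ ω in {ω | A 0 ω ≤ δ}, ENNReal.ofReal (Real.exp (r * B 0 ω)) ∂μ) *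
          (ENNReal.ofReal (s ^ δ) + ENNReal.ofReal (s ^ (δ - 1)) * ∫⁻ ω, ENNReal.ofReal
            (Real.exp (r * perpSum (fun i ↦ A (i + 1)) (fun i ↦ B (i + 1)) n ω)) ∂μ) +
        (∫⁻ ω in {ω | δ < A 0 ω}, ENNReal.ofReal (Real.exp (r * B 0 ω)) ∂μ) *
          (1 + ∫⁻ ω, ENNReal.ofReal
            (Real.exp (r * perpSum (fun i ↦ A (i + 1)) (fun i ↦ B (i + 1)) n ω)) ∂μ) := by
  set Y := perpSum (fun i ↦ A (i + 1)) (fun i ↦ B (i + 1)) n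
  have hY : Measurable Y := measurable_perpSum (fun i ↦ hA (i + 1)) (fun i ↦ hB (i + 1)) n
  set e : ℝ → ℝ≥0∞ := fun y ↦ ENNReal.ofReal (Real.exp (r * y))
  have he : Measurable e := (measurable_id.const_mul r).exp.ennreal_ofReal
  set g : ℝ → ℝ → ℝ → ℝ≥0∞ :=
    fun δ' s' y ↦ ENNReal.ofReal (s' ^ δ') + ENNReal.ofReal (s' ^ (δ' - 1)) * e y
  have hg (δ' s' : ℝ) : Measurable (g δ' s') := (he.const_mul _).const_add _
  have hexp {a δ' s' : ℝ} (ha : 0 ≤ a) (haδ : a ≤ δ') (hδ' : δ' ≤ 1) (hs' : 1 ≤ s') (b y : ℝ) :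
      e (b + a * y) ≤ e b * g δ' s' y := by
    have hs'0 : 0 ≤ s' := zero_le_one.trans hs'
    simp only [e, g]
    rw [← ENNReal.ofReal_mul (by positivity), ← ENNReal.ofReal_add (by positivity) (by positivity),
      ← ENNReal.ofReal_mul (by positivity), mul_add, Real.exp_add, mul_left_comm]
    gcongr
    exact Real.exp_mul_le_rpow_add_rpow_sub_one_mul_exp ha haδ hδ' hs' _
  have hg_lintegral (δ' s' : ℝ) :
      ∫⁻ ω, g δ' s' (Y ω) ∂μ =
        ENNReal.ofReal (s' ^ δ') + ENNReal.ofReal (s' ^ (δ' - 1)) * ∫⁻ ω, e (Y ω) ∂μ := by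
    rw [lintegral_add_left measurable_const, lintegral_const, measure_univ, mul_one,
      lintegral_const_mul _ (f := fun ω ↦ e (Y ω)) (he.comp hY)]
  set pair : Ω → ℝ × ℝ := fun ω ↦ (A 0 ω, B 0 ω)
  have hpair : Measurable pair := (hA 0).prodMk (hB 0)
  set φ : Set (ℝ × ℝ) → ℝ × ℝ → ℝ≥0∞ := fun S ↦ S.indicator fun p ↦ e p.2
  have hφ {S : Set (ℝ × ℝ)} (hS : MeasurableSet S) : Measurable (φ S) :=
    (he.comp measurable_snd).indicator hS
  have hfactor {S : Set (ℝ × ℝ)} (hS : MeasurableSet S) (δ' s' : ℝ) :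
      ∫⁻ ω, φ S (pair ω) * g δ' s' (Y ω) ∂μ =
        (∫⁻ ω in pair ⁻¹' S, e (B 0 ω) ∂μ) * ∫⁻ ω, g δ' s' (Y ω) ∂μ := by
    calc ∫⁻ ω, φ S (pair ω) * g δ' s' (Y ω) ∂μ
        = (∫⁻ ω, φ S (pair ω) ∂μ) * ∫⁻ ω, g δ' s' (Y ω) ∂μ :=
          lintegral_mul_eq_lintegral_mul_lintegral_of_indepFun'' ((hφ hS).comp hpair).aemeasurable
            ((hg δ' s').comp hY).aemeasurable
            ((indepFun_perpSum_shift hA hB hindep n).comp (hφ hS) (hg δ' s'))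
      _ = _ := by rw [← lintegral_indicator (hpair hS)]; rfl
  have hF₁ : MeasurableSet {p : ℝ × ℝ | p.1 ≤ δ} := measurableSet_le measurable_fst measurable_const
  have hF₂ : MeasurableSet {p : ℝ × ℝ | δ < p.1} := measurableSet_lt measurable_const measurable_fst
  -- on `{A₀ > δ}` only `A₀ ≤ 1` is available, which is the bound of `hexp` for `δ' = s' = 1`
  have hpointwise : ∀ᵐ ω ∂μ, e (perpSum A B (n + 1) ω) ≤
      φ {p | p.1 ≤ δ} (pair ω) * g δ s (Y ω) + φ {p | δ < p.1} (pair ω) * g 1 1 (Y ω) := by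
    filter_upwards [hA0] with ω ⟨h0, h1⟩
    rw [perpSum_succ]
    change e (B 0 ω + A 0 ω * Y ω) ≤ _
    by_cases h : A 0 ω ≤ δ
    · simpa [φ, pair, h] using hexp h0 h hδ hs (B 0 ω) (Y ω)
    · simpa [φ, pair, not_le.1 h] using hexp h0 h1 le_rfl le_rfl (B 0 ω) (Y ω)
  calc ∫⁻ ω, e (perpSum A B (n + 1) ω) ∂μ
      ≤ ∫⁻ ω, φ {p | p.1 ≤ δ} (pair ω) * g δ s (Y ω) +
          φ {p | δ < p.1} (pair ω) * g 1 1 (Y ω) ∂μ := lintegral_mono_ae hpointwise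
    _ = (∫⁻ ω, φ {p | p.1 ≤ δ} (pair ω) * g δ s (Y ω) ∂μ) +
          ∫⁻ ω, φ {p | δ < p.1} (pair ω) * g 1 1 (Y ω) ∂μ :=
        lintegral_add_left (((hφ hF₁).comp hpair).mul ((hg δ s).comp hY)) _
    _ = _ := by
        rw [hfactor hF₁, hfactor hF₂, hg_lintegral, hg_lintegral]
        simp only [Real.one_rpow, ENNReal.ofReal_one, one_mul]
        rfl

lemma lintegral_exp_perpSum_le (hA : ∀ i, Measurable (A i)) (hB : ∀ i, Measurable (B i))
    (hindep : iIndepFun (fun i ω ↦ (A i ω, B i ω)) μ)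
    (hA01 : ∀ i, ∀ᵐ ω ∂μ, 0 ≤ A i ω ∧ A i ω ≤ 1) (hδ : δ ≤ 1) (hs : 1 ≤ s) {m β t : ℝ≥0∞}
    (hm : ∀ i, ∫⁻ ω in {ω | A i ω ≤ δ}, ENNReal.ofReal (Real.exp (r * B i ω)) ∂μ ≤ m)
    (hβ : ∀ i, ∫⁻ ω in {ω | δ < A i ω}, ENNReal.ofReal (Real.exp (r * B i ω)) ∂μ ≤ β)
    (ht : 1 ≤ t)
    (hinv : m * (ENNReal.ofReal (s ^ δ) + ENNReal.ofReal (s ^ (δ - 1)) * t) + β * (1 + t) ≤ t)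
    (n : ℕ) : ∫⁻ ω, ENNReal.ofReal (Real.exp (r * perpSum A B n ω)) ∂μ ≤ t := by
  induction n generalizing A B with
  | zero => simpa using ht
  | succ n ih =>
    have hshift := ih (fun i ↦ hA (i + 1)) (fun i ↦ hB (i + 1))
      (hindep.precomp (add_left_injective 1)) (fun i ↦ hA01 (i + 1)) (fun i ↦ hm (i + 1))
      (fun i ↦ hβ (i + 1))
    calc _ ≤ _ := lintegral_exp_perpSum_succ_le r hA hB hindep (hA01 0) hδ hs n
      _ ≤ _ := by gcongr; exacts [hm 0, hβ 0]
      _ ≤ t := hinv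

end ExpMoment

theorem stmt_0_general
    {Ω : Type*} [MeasureSpace Ω] [IsProbabilityMeasure (ℙ : Measure Ω)]
    (A B : ℕ → Ω → ℝ) (X : Ω → ℝ)
    (hA : ∀ n, Measurable (A n)) (hB : ∀ n, Measurable (B n))
    (hindep : iIndepFun (fun n ω => (A n ω, B n ω)) ℙ)
    (hident : ∀ n, IdentDistrib (fun ω => (A n ω, B n ω)) (fun ω => (A 0 ω, B 0 ω)) ℙ ℙ)
    (hApos : ℙ {ω | 0 < A 0 ω} = 1)
    (hXconv : ∀ᵐ ω ∂ℙ, Tendsto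
      (fun n => ∑ k ∈ Finset.range n, (∏ i ∈ Finset.range k, A i ω) * B k ω)
      atTop (nhds (X ω)))
    (r : ℝ)
    (hA1 : ℙ {ω | A 0 ω ≤ 1} = 1)
    (hBexp : ∫⁻ ω, ENNReal.ofReal (Real.exp (r * B 0 ω)) ∂ℙ < ⊤)
    (hB1 : ∫⁻ ω in {ω | A 0 ω = 1}, ENNReal.ofReal (Real.exp (r * B 0 ω)) ∂ℙ < 1) :
    ∫⁻ ω, ENNReal.ofReal (Real.exp (r * X ω)) ∂ℙ < ⊤ := by
  set W : Ω → ℝ≥0∞ := fun ω ↦ ENNReal.ofReal (Real.exp (r * B 0 ω))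
  have hA01 : ∀ i, ∀ᵐ ω ∂ℙ, 0 ≤ A i ω ∧ A i ω ≤ 1 := by
    have h0 : ∀ᵐ ω ∂ℙ, 0 ≤ A 0 ω ∧ A 0 ω ≤ 1 := by
      filter_upwards [(mem_ae_iff_prob_eq_one (measurableSet_lt measurable_const (hA 0))).2 hApos,
        (mem_ae_iff_prob_eq_one (measurableSet_le (hA 0) measurable_const)).2 hA1] with ω h0 h1
      exact ⟨h0.le, h1⟩
    exact fun i ↦ (hident i).symm.ae_snd (p := fun p : ℝ × ℝ ↦ 0 ≤ p.1 ∧ p.1 ≤ 1)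
      ((measurableSet_le measurable_const measurable_fst).inter
        (measurableSet_le measurable_fst measurable_const)) h0
  obtain ⟨δ, hδ, hβ⟩ := exists_lt_setLIntegral_setOf_lt_lt (hA 0) ((hA01 0).mono fun _ h ↦ h.2)
    hBexp.ne hB1
  obtain ⟨s, hs, t, ht, ht1, hinv⟩ := exists_rpow_invariant_bound hBexp.ne hβ hδ
  have hsetLIntegral (i : ℕ) {S : Set ℝ} (hS : MeasurableSet S) :
      ∫⁻ ω in A i ⁻¹' S, ENNReal.ofReal (Real.exp (r * B i ω)) ∂ℙ = ∫⁻ ω in A 0 ⁻¹' S, W ω ∂ℙ :=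
    (hident i).setLIntegral_comp_eq ((hA i).prodMk (hB i)) ((hA 0).prodMk (hB 0))
      (measurable_snd.const_mul r).exp.ennreal_ofReal (hS.preimage measurable_fst)
  have hbound := lintegral_exp_perpSum_le r hA hB hindep hA01 hδ.le hs
    (fun i ↦ (hsetLIntegral i measurableSet_Iic).trans_le (setLIntegral_le_lintegral _ _))
    (fun i ↦ (hsetLIntegral i measurableSet_Ioi).le) ht1 hinv
  refine (lintegral_le_of_ae_tendsto (fun n ↦ ?_) ?_ hbound).trans_lt ht.lt_top
  · exact ((measurable_perpSum hA hB n).const_mul r).exp.ennreal_ofReal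
  · filter_upwards [hXconv] with ω h
    exact (ENNReal.continuous_ofReal.tendsto _).comp
      ((Real.continuous_exp.tendsto _).comp (h.const_mul r))

theorem stmt_0
    {Ω : Type*} [MeasureSpace Ω] [IsProbabilityMeasure (ℙ : Measure Ω)]
    (A B : ℕ → Ω → ℝ) (X : Ω → ℝ)
    (hA : ∀ n, Measurable (A n)) (hB : ∀ n, Measurable (B n)) (hX : Measurable X)
    (hindep : iIndepFun (fun n ω => (A n ω, B n ω)) ℙ)
    (hident : ∀ n, IdentDistrib (fun ω => (A n ω, B n ω)) (fun ω => (A 0 ω, B 0 ω)) ℙ ℙ)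
    (hND1a : ℙ {ω | A 0 ω = 0} = 0) (hND1b : ℙ {ω | B 0 ω = 0} < 1)
    (hND2 : ∀ c : ℝ, ℙ {ω | B 0 ω + A 0 ω * c = c} < 1)
    (hApos : ℙ {ω | 0 < A 0 ω} = 1)
    (hXconv : ∀ᵐ ω ∂ℙ, Tendsto
      (fun n => ∑ k ∈ Finset.range n, (∏ i ∈ Finset.range k, A i ω) * B k ω)
      atTop (nhds (X ω)))
    (r : ℝ) (hr : 0 < r)
    (hA1 : ℙ {ω | A 0 ω ≤ 1} = 1)
    (hBexp : ∫⁻ ω, ENNReal.ofReal (Real.exp (r * B 0 ω)) ∂ℙ < ⊤)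
    (hB1 : ∫⁻ ω in {ω | A 0 ω = 1}, ENNReal.ofReal (Real.exp (r * B 0 ω)) ∂ℙ < 1) :
    ∫⁻ ω, ENNReal.ofReal (Real.exp (r * X ω)) ∂ℙ < ⊤ :=
  stmt_0_general A B X hA hB hindep hident hApos hXconv r hA1 hBexp hB1
end

section
/- Suppose conditions (ND1) and (ND2) hold, P{A∈(0,1]}=1, the perpetuity X=∑_{k≥1}Π_{k-1}B_k converges a.s. (|X|<∞ a.s.), and let r>0. If E[e^{rX}]<∞, then E[e^{rB}·1_{{A=1}}]<1 (irrespective of whether the support of the distribution of X is bounded from the right or not). -/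
/-!
Write `X = B₀ + A₀ Y`, where `Y` is the perpetuity built from the shifted sequence
`(Aₖ₊₁, Bₖ₊₁)ₖ`; `Y` is independent of `(A₀, B₀)` and has the law of `X`. On `{A₀ = 1}` this
gives `e^{rX} = e^{rB₀} e^{rY}`, hence `E[e^{rX}; A₀ = 1] = q · E e^{rX}` with
`q = E[e^{rB} 1_{A = 1}]`. As `E e^{rX}` is positive and finite, `q < 1` unless `A = 1` a.s.
In that case `X = ∑ Bₖ` converges a.s., so `Bₖ → 0` a.s., and since the `Bₖ` are identically
distributed, `B = 0` a.s., contradicting (ND1).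
-/

open MeasureTheory ProbabilityTheory Filter Finset Topology

def perpetuityPartialSum (n : ℕ) (x : ℕ → ℝ × ℝ) : ℝ :=
  ∑ k ∈ range n, (∏ i ∈ range k, (x i).1) * (x k).2

lemma perpetuityPartialSum_succ (n : ℕ) (x : ℕ → ℝ × ℝ) :
    perpetuityPartialSum (n + 1) x
      = (x 0).2 + (x 0).1 * perpetuityPartialSum n (fun k => x (k + 1)) := by
  simp only [perpetuityPartialSum, sum_range_succ', prod_range_succ', mul_sum, prod_range_zero,
    one_mul]
  rw [add_comm]
  congr 1
  exact sum_congr rfl fun k _ => by ring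

lemma perpetuityPartialSum_of_forall_fst_eq_one {x : ℕ → ℝ × ℝ} (hx : ∀ k, (x k).1 = 1)
    (n : ℕ) : perpetuityPartialSum n x = ∑ k ∈ range n, (x k).2 := by
  simp [perpetuityPartialSum, hx]

@[fun_prop]
lemma measurable_perpetuityPartialSum (n : ℕ) : Measurable (perpetuityPartialSum n) := by
  unfold perpetuityPartialSum
  fun_prop

lemma tendsto_zero_of_tendsto_sum_range {G : Type*} [AddCommGroup G] [TopologicalSpace G]
    [IsTopologicalAddGroup G] {u : ℕ → G} {l : G}
    (h : Tendsto (fun n => ∑ k ∈ range n, u k) atTop (𝓝 l)) : Tendsto u atTop (𝓝 0) := by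
  simpa [sum_range_succ] using ((tendsto_add_atTop_iff_nat 1).2 h).sub h

namespace ProbabilityTheory

variable {Ω β : Type*} {mΩ : MeasurableSpace Ω} {mβ : MeasurableSpace β} {μ : Measure Ω}

lemma iIndepFun.identDistrib_shift {f : ℕ → Ω → β} (h : iIndepFun f μ)
    (hident : ∀ n, IdentDistrib (f n) (f 0) μ μ) (n : ℕ) :
    IdentDistrib (fun ω k => f (k + n) ω) (fun ω k => f k ω) μ μ :=
  IdentDistrib.pi (fun k => (hident _).trans (hident k).symm)
    (h.precomp (add_left_injective n)) h

lemma iIndepFun.indepFun_shift_one {f : ℕ → Ω → β} (h : iIndepFun f μ)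
    (hf : ∀ n, Measurable (f n)) : IndepFun (f 0) (fun ω k => f (k + 1) ω) μ := by
  let σ : ℕ → MeasurableSpace Ω := fun k => MeasurableSpace.comap (f k) mβ
  have hσ : ∀ k, Measurable[σ k] (f k) := fun k => comap_measurable (f k)
  have hblocks : Indep (⨆ k ∈ ({0} : Set ℕ), σ k) (⨆ k ∈ Set.Ioi 0, σ k) μ :=
    indep_iSup_of_disjoint (fun k => (hf k).comap_le) h.iIndep (by simp)
  rw [IndepFun_iff_Indep]
  refine indep_of_indep_of_le_left (indep_of_indep_of_le_right hblocks ?_) ?_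
  · exact measurable_iff_comap_le.mp <| @measurable_pi_lambda Ω ℕ (fun _ => β)
      (⨆ k ∈ Set.Ioi 0, σ k) _ _ fun k => (hσ (k + 1)).mono (le_biSup σ k.succ_pos) le_rfl
  · exact measurable_iff_comap_le.mp ((hσ 0).mono (le_biSup σ rfl) le_rfl)

lemma ae_eq_zero_of_tendsto_zero_of_identDistrib [IsFiniteMeasure μ] {f : ℕ → Ω → ℝ}
    (hident : ∀ n, IdentDistrib (f n) (f 0) μ μ)
    (h : ∀ᵐ ω ∂μ, Tendsto (fun n => f n ω) atTop (𝓝 0)) : f 0 =ᵐ[μ] 0 := by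
  have hlim : TendstoInMeasure μ f atTop 0 :=
    tendstoInMeasure_of_tendsto_ae (fun n => (hident n).aemeasurable_fst.aestronglyMeasurable) h
  have hconst : TendstoInMeasure μ (fun _ : ℕ => f 0) atTop 0 := by
    intro ε hε
    have hset : MeasurableSet {y : ℝ | ε ≤ edist y 0} :=
      measurableSet_le measurable_const (by fun_prop)
    have hsame : ∀ n, μ {ω | ε ≤ edist (f n ω) ((0 : Ω → ℝ) ω)}
        = μ {ω | ε ≤ edist (f 0 ω) ((0 : Ω → ℝ) ω)} := fun n => (hident n).measure_mem_eq hset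
    simpa only [hsame] using hlim ε hε
  exact tendstoInMeasure_ae_unique (tendstoInMeasure_of_tendsto_ae
    (fun _ => (hident 0).aemeasurable_fst.aestronglyMeasurable)
    (ae_of_all _ fun _ => tendsto_const_nhds)) hconst

variable {Z : ℕ → Ω → ℝ × ℝ} {X : Ω → ℝ}

lemma iIndepFun.exists_perpetuity_decomposition (hZ : ∀ n, Measurable (Z n))
    (hindep : iIndepFun Z μ) (hident : ∀ n, IdentDistrib (Z n) (Z 0) μ μ)
    (hconv : ∀ᵐ ω ∂μ, Tendsto (fun n => perpetuityPartialSum n (Z · ω)) atTop (𝓝 (X ω))) :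
    ∃ Y : Ω → ℝ, Measurable Y ∧ IndepFun (Z 0) Y μ ∧ IdentDistrib Y X μ μ ∧
      ∀ᵐ ω ∂μ, X ω = (Z 0 ω).2 + (Z 0 ω).1 * Y ω := by
  have hS : Measurable fun ω k => Z k ω := measurable_pi_lambda _ hZ
  have hS₁ : Measurable fun ω k => Z (k + 1) ω := measurable_pi_lambda _ fun k => hZ (k + 1)
  have hshift := hindep.identDistrib_shift hident 1
  -- `G` sums a perpetuity on sequence space; `Y` is `G` applied to the shifted sequence.
  obtain ⟨G, hG, hGlim⟩ : ∃ G : (ℕ → ℝ × ℝ) → ℝ, Measurable G ∧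
      ∀ᵐ x ∂μ.map (fun ω k => Z k ω), Tendsto (perpetuityPartialSum · x) atTop (𝓝 (G x)) := by
    refine measurable_limit_of_tendsto_metrizable_ae (fun n => by fun_prop) ?_
    rw [ae_map_iff hS.aemeasurable (measurableSet_exists_tendsto measurable_perpetuityPartialSum)]
    filter_upwards [hconv] with ω hω using ⟨X ω, hω⟩
  have hGlim₁ : ∀ᵐ ω ∂μ, Tendsto (perpetuityPartialSum · (fun k => Z (k + 1) ω)) atTop
      (𝓝 (G fun k => Z (k + 1) ω)) := by
    rw [← hshift.map_eq] at hGlim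
    exact ae_of_ae_map hS₁.aemeasurable hGlim
  have hGX : (fun ω => G (Z · ω)) =ᵐ[μ] X := by
    filter_upwards [ae_of_ae_map hS.aemeasurable hGlim, hconv] with ω hG hX
    exact tendsto_nhds_unique hG hX
  refine ⟨fun ω => G fun k => Z (k + 1) ω, hG.comp hS₁,
    (hindep.indepFun_shift_one hZ).comp measurable_id hG,
    (hshift.comp hG).trans (.of_ae_eq (hG.comp hS).aemeasurable hGX), ?_⟩
  filter_upwards [hconv, hGlim₁] with ω hX hY
  refine tendsto_nhds_unique ((tendsto_add_atTop_iff_nat 1).2 hX) ?_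
  simp_rw [perpetuityPartialSum_succ]
  exact (hY.const_mul _).const_add _

lemma ae_snd_eq_zero_of_perpetuity_of_ae_fst_eq_one [IsFiniteMeasure μ]
    (hident : ∀ n, IdentDistrib (Z n) (Z 0) μ μ) (hA : ∀ᵐ ω ∂μ, (Z 0 ω).1 = 1)
    (hconv : ∀ᵐ ω ∂μ, Tendsto (fun n => perpetuityPartialSum n (Z · ω)) atTop (𝓝 (X ω))) :
    (fun ω => (Z 0 ω).2) =ᵐ[μ] 0 := by
  have hA_all : ∀ᵐ ω ∂μ, ∀ k, (Z k ω).1 = 1 := ae_all_iff.2 fun k =>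
    (hident k).symm.ae_snd (measurable_fst (measurableSet_singleton 1)) hA
  refine ae_eq_zero_of_tendsto_zero_of_identDistrib (f := fun n ω => (Z n ω).2)
    (fun n => (hident n).comp measurable_snd) ?_
  filter_upwards [hA_all, hconv] with ω hA_ω hX
  refine tendsto_zero_of_tendsto_sum_range (l := X ω) ?_
  simpa only [perpetuityPartialSum_of_forall_fst_eq_one hA_ω] using hX

end ProbabilityTheory

section LIntegral

open ENNReal

variable {Ω : Type*} {mΩ : MeasurableSpace Ω} {μ : Measure Ω}

lemma setLIntegral_exp_eq_mul_of_indepFun {Z : Ω → ℝ × ℝ} {X Y : Ω → ℝ} (hZ : Measurable Z)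
    (hY : Measurable Y) (hind : IndepFun Z Y μ) (hX : ∀ᵐ ω ∂μ, X ω = (Z ω).2 + (Z ω).1 * Y ω)
    (r : ℝ) :
    ∫⁻ ω in {ω | (Z ω).1 = 1}, ENNReal.ofReal (Real.exp (r * X ω)) ∂μ
      = (∫⁻ ω in {ω | (Z ω).1 = 1}, ENNReal.ofReal (Real.exp (r * (Z ω).2)) ∂μ)
        * ∫⁻ ω, ENNReal.ofReal (Real.exp (r * Y ω)) ∂μ := by
  set g : ℝ × ℝ → ℝ≥0∞ := {p | p.1 = 1}.indicator fun p => ENNReal.ofReal (Real.exp (r * p.2))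
  set h : ℝ → ℝ≥0∞ := fun y => ENNReal.ofReal (Real.exp (r * y))
  have hg : Measurable g :=
    Measurable.indicator (by fun_prop) (measurable_fst (measurableSet_singleton 1))
  have hh : Measurable h := by fun_prop
  have hs : MeasurableSet {ω | (Z ω).1 = 1} := hZ.fst (measurableSet_singleton 1)
  rw [← lintegral_indicator hs, ← lintegral_indicator hs]
  calc _ = ∫⁻ ω, g (Z ω) * h (Y ω) ∂μ := by
        refine lintegral_congr_ae ?_
        filter_upwards [hX] with ω hω
        by_cases h1 : (Z ω).1 = 1
        · simp [g, h, h1, hω, mul_add, Real.exp_add, ENNReal.ofReal_mul (Real.exp_pos _).le]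
        · simp [g, h1]
    _ = _ := lintegral_mul_eq_lintegral_mul_lintegral_of_indepFun (hg.comp hZ) (hh.comp hY)
        (hind.comp hg hh)

lemma lt_one_of_setLIntegral_eq_mul {f : Ω → ℝ≥0∞} {s : Set Ω} {c : ℝ≥0∞} (hf : Measurable f)
    (hf0 : ∀ ω, f ω ≠ 0) (hfin : ∫⁻ ω, f ω ∂μ ≠ ∞) (hs : MeasurableSet s) (hsc : μ sᶜ ≠ 0)
    (h : ∫⁻ ω in s, f ω ∂μ = c * ∫⁻ ω, f ω ∂μ) : c < 1 := by
  have hcompl : 0 < ∫⁻ ω in sᶜ, f ω ∂μ := by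
    rw [lintegral_pos_iff_support hf, Function.support_eq_univ hf0, Measure.restrict_apply_univ]
    exact pos_iff_ne_zero.2 hsc
  have hlt : c * ∫⁻ ω, f ω ∂μ < ∫⁻ ω, f ω ∂μ :=
    calc c * ∫⁻ ω, f ω ∂μ < c * ∫⁻ ω, f ω ∂μ + ∫⁻ ω in sᶜ, f ω ∂μ :=
          ENNReal.lt_add_right (ne_top_of_le_ne_top hfin (h ▸ setLIntegral_le_lintegral s f))
            hcompl.ne'
      _ = ∫⁻ ω, f ω ∂μ := by rw [← h, lintegral_add_compl f hs]
  by_contra! hc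
  exact hlt.not_ge (le_mul_of_one_le_left' hc)

end LIntegral

theorem stmt_3_general
    {Ω : Type*} [MeasureSpace Ω] [IsProbabilityMeasure (ℙ : Measure Ω)]
    (A B : ℕ → Ω → ℝ) (X : Ω → ℝ)
    (hA : ∀ n, Measurable (A n)) (hB : ∀ n, Measurable (B n)) (hX : Measurable X)
    (hindep : iIndepFun (fun n ω => (A n ω, B n ω)) ℙ)
    (hident : ∀ n, IdentDistrib (fun ω => (A n ω, B n ω)) (fun ω => (A 0 ω, B 0 ω)) ℙ ℙ)
    (hND1b : ℙ {ω | B 0 ω = 0} < 1)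
    (hXconv : ∀ᵐ ω ∂ℙ, Tendsto
      (fun n => ∑ k ∈ Finset.range n, (∏ i ∈ Finset.range k, A i ω) * B k ω)
      atTop (nhds (X ω)))
    (r : ℝ)
    (hXexp : ∫⁻ ω, ENNReal.ofReal (Real.exp (r * X ω)) ∂ℙ < ⊤) :
    ∫⁻ ω in {ω | A 0 ω = 1}, ENNReal.ofReal (Real.exp (r * B 0 ω)) ∂ℙ < 1 := by
  set Z : ℕ → Ω → ℝ × ℝ := fun n ω => (A n ω, B n ω)
  have hZ : ∀ n, Measurable (Z n) := fun n => (hA n).prodMk (hB n)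
  obtain ⟨Y, hY, hZY, hYX, hXdec⟩ := hindep.exists_perpetuity_decomposition hZ hident hXconv
  have hYX_exp : ∫⁻ ω, ENNReal.ofReal (Real.exp (r * Y ω))
      = ∫⁻ ω, ENNReal.ofReal (Real.exp (r * X ω)) :=
    (hYX.comp (by fun_prop : Measurable fun x => ENNReal.ofReal (Real.exp (r * x)))).lintegral_eq
  have hsplit := setLIntegral_exp_eq_mul_of_indepFun (hZ 0) hY hZY hXdec r
  rw [hYX_exp] at hsplit
  refine lt_one_of_setLIntegral_eq_mul (by fun_prop) (fun ω => by positivity) hXexp.ne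
    ((hA 0) (measurableSet_singleton 1)) (fun hA1 => hND1b.ne ?_) hsplit
  have hB0 := ae_snd_eq_zero_of_perpetuity_of_ae_fst_eq_one hident (ae_iff.2 hA1) hXconv
  exact (ae_iff_prob_eq_one (by fun_prop)).1 hB0

theorem stmt_3
    {Ω : Type*} [MeasureSpace Ω] [IsProbabilityMeasure (ℙ : Measure Ω)]
    (A B : ℕ → Ω → ℝ) (X : Ω → ℝ)
    (hA : ∀ n, Measurable (A n)) (hB : ∀ n, Measurable (B n)) (hX : Measurable X)
    (hindep : iIndepFun (fun n ω => (A n ω, B n ω)) ℙ)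
    (hident : ∀ n, IdentDistrib (fun ω => (A n ω, B n ω)) (fun ω => (A 0 ω, B 0 ω)) ℙ ℙ)
    (hND1a : ℙ {ω | A 0 ω = 0} = 0) (hND1b : ℙ {ω | B 0 ω = 0} < 1)
    (hND2 : ∀ c : ℝ, ℙ {ω | B 0 ω + A 0 ω * c = c} < 1)
    (hXconv : ∀ᵐ ω ∂ℙ, Tendsto
      (fun n => ∑ k ∈ Finset.range n, (∏ i ∈ Finset.range k, A i ω) * B k ω)
      atTop (nhds (X ω)))
    (hA01 : ℙ {ω | A 0 ω ∈ Set.Ioc (0 : ℝ) 1} = 1)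
    (r : ℝ) (hr : 0 < r)
    (hXexp : ∫⁻ ω, ENNReal.ofReal (Real.exp (r * X ω)) ∂ℙ < ⊤) :
    ∫⁻ ω in {ω | A 0 ω = 1}, ENNReal.ofReal (Real.exp (r * B 0 ω)) ∂ℙ < 1 :=
  stmt_3_general A B X hA hB hX hindep hident hND1b hXconv r hXexp
end

section
/- Suppose conditions (ND1) and (ND2) hold, the perpetuity X=∑_{k≥1}Π_{k-1}B_k converges a.s. (|X|<∞ a.s.), P{A=−1}>0, and let r>0. Then E[e^{rX}]<∞ if, and only if, E[e^{r|X|}]<∞. -/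
/-!
Write `V n = (A n, B n)` and let `X₁` be the perpetuity built from the shifted sequence
`(V (n + 1))ₙ`. Then `X = B 0 + A 0 * X₁` a.s., `X₁` has the law of `X` (the shifted sequence
has the same product law) and `X₁` is independent of `V 0`. On the event `{A 0 = -1}` this reads
`e^{rX} = e^{r B 0} e^{-r X₁}`, so independence gives
`E[e^{rX}] ≥ E[e^{r B 0}; A 0 = -1] · E[e^{-rX}]` with a nonzero first factor. Hence
`E[e^{rX}] < ∞` forces `E[e^{-rX}] < ∞`, and `e^{r|X|} ≤ e^{rX} + e^{-rX}`.
-/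

open MeasureTheory ProbabilityTheory Filter Finset

open scoped ENNReal Topology

section

variable {Ω : Type*} {mΩ : MeasurableSpace Ω} {μ : Measure Ω}

section Shift

variable {β : Type*} [MeasurableSpace β] {V : ℕ → Ω → β}

lemma ProbabilityTheory.iIndepFun.indepFun_head_tail (h : iIndepFun V μ)
    (hV : ∀ n, Measurable (V n)) : IndepFun (V 0) (fun ω n => V (n + 1) ω) μ := by
  have hsplit := indep_iSup_of_disjoint (fun n => (hV n).comap_le) h.iIndep
    (disjoint_compl_right (a := ({0} : Set ℕ)))
  rw [IndepFun_iff_Indep]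
  refine indep_of_indep_of_le_right (indep_of_indep_of_le_left hsplit ?_) ?_
  · exact le_iSup₂ (f := fun n (_ : n ∈ ({0} : Set ℕ)) => MeasurableSpace.comap (V n) _) 0 rfl
  · rw [MeasurableSpace.pi, MeasurableSpace.comap_iSup]
    refine iSup_le fun n => ?_
    rw [MeasurableSpace.comap_comp]
    exact le_iSup₂ (f := fun n (_ : n ∈ ({0} : Set ℕ)ᶜ) => MeasurableSpace.comap (V n) _) (n + 1)
      n.succ_ne_zero

lemma ProbabilityTheory.iIndepFun.identDistrib_tail (h : iIndepFun V μ)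
    (hV : ∀ n, Measurable (V n)) (hident : ∀ n, IdentDistrib (V n) (V 0) μ μ) :
    IdentDistrib (fun ω n => V (n + 1) ω) (fun ω n => V n ω) μ μ where
  aemeasurable_fst := (measurable_pi_lambda _ fun n => hV (n + 1)).aemeasurable
  aemeasurable_snd := (measurable_pi_lambda _ hV).aemeasurable
  map_eq := by
    rw [(h.precomp Nat.succ_injective).map_fun_eq_infinitePi_map fun n => hV (n + 1),
      h.map_fun_eq_infinitePi_map hV]
    congr 1
    funext n
    rw [(hident (n + 1)).map_eq, (hident n).map_eq]

end Shift

/-- `v k` plays the role of `(A_{k+1}, B_{k+1})`, so this is `∑_{k < n} Π_k B_{k+1}`. -/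
def perpetuitySum (v : ℕ → ℝ × ℝ) (n : ℕ) : ℝ :=
  ∑ k ∈ range n, (∏ i ∈ range k, (v i).1) * (v k).2

noncomputable def perpetuity (v : ℕ → ℝ × ℝ) : ℝ :=
  limUnder atTop (perpetuitySum v)

lemma perpetuitySum_succ (v : ℕ → ℝ × ℝ) (n : ℕ) :
    perpetuitySum v (n + 1) = (v 0).2 + (v 0).1 * perpetuitySum (fun k => v (k + 1)) n := by
  simp only [perpetuitySum, sum_range_succ', prod_range_succ', prod_range_zero, one_mul, mul_sum]
  rw [add_comm]
  congr 1
  exact sum_congr rfl fun k _ => by ring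

@[fun_prop]
lemma measurable_perpetuitySum (n : ℕ) : Measurable fun v => perpetuitySum v n := by
  unfold perpetuitySum
  fun_prop

lemma measurable_perpetuity : Measurable perpetuity :=
  (StronglyMeasurable.limUnder fun n => (measurable_perpetuitySum n).stronglyMeasurable).measurable

lemma ae_tendsto_perpetuitySum_tail {V : ℕ → Ω → ℝ × ℝ} (h : iIndepFun V μ)
    (hV : ∀ n, Measurable (V n)) (hident : ∀ n, IdentDistrib (V n) (V 0) μ μ)
    (hconv : ∀ᵐ ω ∂μ, ∃ c, Tendsto (perpetuitySum fun n => V n ω) atTop (𝓝 c)) :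
    ∀ᵐ ω ∂μ, Tendsto (perpetuitySum fun n => V (n + 1) ω) atTop
      (𝓝 (perpetuity fun n => V (n + 1) ω)) := by
  have hconv_tail := (h.identDistrib_tail hV hident).symm.ae_mem_snd
    (measurableSet_exists_tendsto measurable_perpetuitySum) hconv
  exact hconv_tail.mono fun ω hω => tendsto_nhds_limUnder hω

lemma lintegral_exp_neg_lt_top_of_eq_add_mul {A B X X₁ : Ω → ℝ} (hA : Measurable A)
    (hB : Measurable B) (hX₁ : Measurable X₁) (hindep : IndepFun (fun ω => (A ω, B ω)) X₁ μ)
    (hident : IdentDistrib X₁ X μ μ) (hdecomp : ∀ᵐ ω ∂μ, X ω = B ω + A ω * X₁ ω)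
    (hA_neg_one : 0 < μ {ω | A ω = -1}) (r : ℝ)
    (hfin : ∫⁻ ω, ENNReal.ofReal (Real.exp (r * X ω)) ∂μ < ∞) :
    ∫⁻ ω, ENNReal.ofReal (Real.exp (-(r * X ω))) ∂μ < ∞ := by
  set φ : ℝ × ℝ → ℝ≥0∞ := fun p => if p.1 = -1 then ENNReal.ofReal (Real.exp (r * p.2)) else 0
  set ψ : ℝ → ℝ≥0∞ := fun x => ENNReal.ofReal (Real.exp (-(r * x)))
  have hφ : Measurable φ :=
    Measurable.ite (measurable_fst (measurableSet_singleton _)) (by fun_prop) measurable_const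
  have hψ : Measurable ψ := by fun_prop
  have hAB : Measurable fun ω => (A ω, B ω) := hA.prodMk hB
  have hprod_le : (∫⁻ ω, φ (A ω, B ω) ∂μ) * ∫⁻ ω, ψ (X₁ ω) ∂μ
      ≤ ∫⁻ ω, ENNReal.ofReal (Real.exp (r * X ω)) ∂μ := by
    have hind : IndepFun (fun ω => φ (A ω, B ω)) (fun ω => ψ (X₁ ω)) μ := hindep.comp hφ hψ
    rw [← lintegral_mul_eq_lintegral_mul_lintegral_of_indepFun'' (f := fun ω => φ (A ω, B ω))
      (g := fun ω => ψ (X₁ ω)) (hφ.comp hAB).aemeasurable (hψ.comp hX₁).aemeasurable hind]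
    refine lintegral_mono_ae (hdecomp.mono fun ω hω => ?_)
    by_cases hAω : A ω = -1
    · simp only [φ, ψ, if_pos hAω]
      rw [← ENNReal.ofReal_mul (Real.exp_nonneg _), ← Real.exp_add, hω, hAω]
      apply le_of_eq
      congr 2
      ring
    · simp [φ, hAω]
  have hφ_pos : ∫⁻ ω, φ (A ω, B ω) ∂μ ≠ 0 := by
    rw [Ne, lintegral_eq_zero_iff (f := fun ω => φ (A ω, B ω)) (hφ.comp hAB)]
    intro hzero
    refine hA_neg_one.ne' (measure_mono_null (fun ω (hAω : A ω = -1) => ?_) hzero)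
    simp [φ, hAω, Real.exp_pos]
  have hlaw : ∫⁻ ω, ψ (X₁ ω) ∂μ = ∫⁻ ω, ψ (X ω) ∂μ := (hident.comp hψ).lintegral_eq
  rw [← hlaw]
  exact ENNReal.lt_top_of_mul_ne_top_right (hprod_le.trans_lt hfin).ne hφ_pos

lemma lintegral_exp_mul_abs_le {X : Ω → ℝ} (hX : Measurable X) (r : ℝ) :
    ∫⁻ ω, ENNReal.ofReal (Real.exp (r * |X ω|)) ∂μ
      ≤ ∫⁻ ω, ENNReal.ofReal (Real.exp (r * X ω)) ∂μ
        + ∫⁻ ω, ENNReal.ofReal (Real.exp (-(r * X ω))) ∂μ := by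
  rw [← lintegral_add_left (by fun_prop)]
  refine lintegral_mono fun ω => ?_
  rcases abs_choice (X ω) with h | h <;> rw [h]
  · exact le_self_add
  · rw [mul_neg]
    exact le_add_self

end

theorem stmt_4_general
    {Ω : Type*} [MeasureSpace Ω]
    (A B : ℕ → Ω → ℝ) (X : Ω → ℝ)
    (hA : ∀ n, Measurable (A n)) (hB : ∀ n, Measurable (B n)) (hX : Measurable X)
    (hindep : iIndepFun (fun n ω => (A n ω, B n ω)) ℙ)
    (hident : ∀ n, IdentDistrib (fun ω => (A n ω, B n ω)) (fun ω => (A 0 ω, B 0 ω)) ℙ ℙ)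
    (hXconv : ∀ᵐ ω ∂ℙ, Tendsto
      (fun n => ∑ k ∈ Finset.range n, (∏ i ∈ Finset.range k, A i ω) * B k ω)
      atTop (nhds (X ω)))
    (hAneg1 : 0 < ℙ {ω | A 0 ω = -1})
    (r : ℝ) (hr : 0 < r) :
    (∫⁻ ω, ENNReal.ofReal (Real.exp (r * X ω)) ∂ℙ < ⊤) ↔
      (∫⁻ ω, ENNReal.ofReal (Real.exp (r * |X ω|)) ∂ℙ < ⊤) := by
  refine ⟨fun hfin => ?_, fun hfin => (lintegral_mono fun ω => ?_).trans_lt hfin⟩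
  swap
  · gcongr
    exact le_abs_self _
  set V : ℕ → Ω → ℝ × ℝ := fun n ω => (A n ω, B n ω)
  have hV : ∀ n, Measurable (V n) := fun n => (hA n).prodMk (hB n)
  have hS : ∀ᵐ ω ∂ℙ, Tendsto (perpetuitySum fun n => V n ω) atTop (𝓝 (X ω)) := hXconv
  set X₁ : Ω → ℝ := fun ω => perpetuity fun n => V (n + 1) ω
  have hT := ae_tendsto_perpetuitySum_tail hindep hV hident (hS.mono fun ω h => ⟨_, h⟩)
  have hdecomp : ∀ᵐ ω ∂ℙ, X ω = B 0 ω + A 0 ω * X₁ ω := by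
    filter_upwards [hS, hT] with ω hSω hTω
    refine tendsto_nhds_unique (hSω.comp (tendsto_add_atTop_nat 1)) ?_
    simp only [Function.comp_def, perpetuitySum_succ]
    exact tendsto_const_nhds.add (tendsto_const_nhds.mul hTω)
  have hlaw : IdentDistrib X₁ X ℙ ℙ :=
    ((hindep.identDistrib_tail hV hident).comp measurable_perpetuity).trans <|
      .of_ae_eq (measurable_perpetuity.comp (measurable_pi_lambda _ hV)).aemeasurable
        (hS.mono fun ω h => h.limUnder_eq)
  have hindep₁ : IndepFun (V 0) X₁ ℙ :=
    (hindep.indepFun_head_tail hV).comp measurable_id measurable_perpetuity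
  have hneg := lintegral_exp_neg_lt_top_of_eq_add_mul (hA 0) (hB 0)
    (measurable_perpetuity.comp (measurable_pi_lambda _ fun n => hV (n + 1))) hindep₁ hlaw
    hdecomp hAneg1 r hfin
  exact (lintegral_exp_mul_abs_le hX r).trans_lt (ENNReal.add_lt_top.2 ⟨hfin, hneg⟩)

theorem stmt_4
    {Ω : Type*} [MeasureSpace Ω] [IsProbabilityMeasure (ℙ : Measure Ω)]
    (A B : ℕ → Ω → ℝ) (X : Ω → ℝ)
    (hA : ∀ n, Measurable (A n)) (hB : ∀ n, Measurable (B n)) (hX : Measurable X)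
    (hindep : iIndepFun (fun n ω => (A n ω, B n ω)) ℙ)
    (hident : ∀ n, IdentDistrib (fun ω => (A n ω, B n ω)) (fun ω => (A 0 ω, B 0 ω)) ℙ ℙ)
    (hND1a : ℙ {ω | A 0 ω = 0} = 0) (hND1b : ℙ {ω | B 0 ω = 0} < 1)
    (hND2 : ∀ c : ℝ, ℙ {ω | B 0 ω + A 0 ω * c = c} < 1)
    (hXconv : ∀ᵐ ω ∂ℙ, Tendsto
      (fun n => ∑ k ∈ Finset.range n, (∏ i ∈ Finset.range k, A i ω) * B k ω)
      atTop (nhds (X ω)))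
    (hAneg1 : 0 < ℙ {ω | A 0 ω = -1})
    (r : ℝ) (hr : 0 < r) :
    (∫⁻ ω, ENNReal.ofReal (Real.exp (r * X ω)) ∂ℙ < ⊤) ↔
      (∫⁻ ω, ENNReal.ofReal (Real.exp (r * |X ω|)) ∂ℙ < ⊤) :=
  stmt_4_general A B X hA hB hX hindep hident hXconv hAneg1 r hr
end

section
/- Assume that A and B are independent, P{B=0}<1, P{A∈(0,1)}=1 (i.e., P{A∈(0,1]}=1 and P{A=1}=0), the perpetuity X=∑_{k≥1}Π_{k-1}B_k converges a.s., and let r>0. Then E[e^{rX*}]<∞ if, and only if, E[φ(rA)]<∞, where X*:=∑_{k≥1}Π_k B_{k+1}=A_1B_2+A_1A_2B_3+⋯ and φ(s):=E[e^{sB}]. -/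
/-!
Write `Zₖ = (Aₖ, Bₖ₊₁)`: these pairs are i.i.d. with independent coordinates, and
`X* = ∑ₖ A₀⋯Aₖ Bₖ₊₁ = A₀ (B₁ + T)`, where the tail perpetuity `T` is a function of
`Z₁, Z₂, …` only.

If `E e^{rX*} < ∞`: decoupling `Z₀` from `T` gives `E e^{rX*} = E[e^{rA₀B₁} m(A₀)]` with
`m(a) = E e^{raT}`, and `m ≥ e^{-rM} P(T ≥ -M) > 0` on `(0,1)`, so `E e^{rA₀B₁} = E φ(rA) < ∞`.

Conversely, `rX*` is dominated by the nonnegative majorant `∑ₖ θ₀⋯θₖ₋₁ rAₖBₖ₊₁⁺`, where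
`θᵢ = c` if `Aᵢ ≤ c` and `θᵢ = 1` otherwise. Choosing `c < 1` with `E[e^{rAB⁺}; A > c] < 1`,
convexity of `exp` yields `K` with `E[e^{x rAB⁺} e^{Kθx}] ≤ e^{Kx}` for all `x ∈ [0,1]`. Induction
on the truncations then bounds every `E e^{x Sₙ}` by `e^{Kx}`, and Fatou's lemma concludes.
-/

open MeasureTheory ProbabilityTheory Filter Finset
open scoped Topology ENNReal

section Independence

variable {Ω ι β γ δ : Type*} {mΩ : MeasurableSpace Ω} {μ : Measure Ω}
  [MeasurableSpace β] [MeasurableSpace γ] [MeasurableSpace δ]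

def interleave (X Y : ι → Ω → β) (p : ι × Bool) (ω : Ω) : β := cond p.2 (Y p.1 ω) (X p.1 ω)

lemma measurable_interleave {X Y : ι → Ω → β} (hX : ∀ i, Measurable (X i))
    (hY : ∀ i, Measurable (Y i)) (p : ι × Bool) : Measurable (interleave X Y p) := by
  obtain ⟨i, _ | _⟩ := p
  exacts [hX i, hY i]

lemma iIndepFun_cond_of_indepFun [IsProbabilityMeasure μ] {X Y : Ω → β}
    (h : IndepFun X Y μ) : iIndepFun (fun b ω => cond b (Y ω) (X ω)) μ := by
  rw [iIndepFun_iff_measure_inter_preimage_eq_mul]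
  intro S sets hsets
  have hS : ∀ S : Finset Bool, S = ∅ ∨ S = {false} ∨ S = {true} ∨ S = {false, true} := by
    decide
  rcases hS S with rfl | rfl | rfl | rfl
  · simp
  · simp
  · simp
  · rw [Finset.set_biInter_insert, Finset.set_biInter_singleton, Finset.prod_pair (by decide)]
    exact h.measure_inter_preimage_eq_mul _ _ (hsets false (by simp)) (hsets true (by simp))

lemma iIndepFun_interleave [IsProbabilityMeasure μ] {X Y : ι → Ω → β}
    (hX : ∀ i, Measurable (X i)) (hY : ∀ i, Measurable (Y i))
    (h : iIndepFun (fun i ω => (X i ω, Y i ω)) μ) (hXY : ∀ i, IndepFun (X i) (Y i) μ) :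
    iIndepFun (interleave X Y) μ := by
  have hpair : ∀ _ : ι, Measurable fun z : β × β => fun b : Bool => cond b z.2 z.1 :=
    fun _ => measurable_pi_lambda _ fun b => by cases b; exacts [measurable_fst, measurable_snd]
  exact iIndepFun_uncurry' (X := fun (i : ι) (b : Bool) ω => cond b (Y i ω) (X i ω))
    (fun i b => measurable_interleave hX hY (i, b)) (h.comp _ hpair)
    fun i => iIndepFun_cond_of_indepFun (hXY i)

lemma ProbabilityTheory.iIndepFun.interleave_comp_right {X Y : ι → Ω → β}
    (h : iIndepFun (interleave X Y) μ) {e : ι → ι} (he : Function.Injective e) :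
    iIndepFun (interleave X fun i => Y (e i)) μ := by
  have hg : Function.Injective fun p : ι × Bool => (bif p.2 then e p.1 else p.1, p.2) := by
    rintro ⟨i, _ | _⟩ ⟨i', _ | _⟩ h <;> simp_all [he.eq_iff]
  convert h.precomp hg using 1
  ext ⟨i, _ | _⟩ ω <;> rfl

abbrev blockSigma (f : ι → Ω → β) (s : Set ι) : MeasurableSpace Ω :=
  ⨆ i ∈ s, MeasurableSpace.comap (f i) inferInstance

lemma measurable_blockSigma {f : ι → Ω → β} {s : Set ι} {i : ι} (hi : i ∈ s) :
    Measurable[blockSigma f s] (f i) :=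
  Measurable.of_comap_le (le_biSup (fun i => MeasurableSpace.comap (f i) inferInstance) hi)

lemma indepFun_of_measurable_blockSigma {f : ι → Ω → β} (hf : ∀ i, Measurable (f i))
    (h : iIndepFun f μ) {s t : Set ι} (hst : Disjoint s t) {U : Ω → γ} {V : Ω → δ}
    (hU : Measurable[blockSigma f s] U) (hV : Measurable[blockSigma f t] V) :
    IndepFun U V μ := by
  rw [IndepFun_iff_Indep]
  exact indep_of_indep_of_le
    (indep_iSup_of_disjoint (fun i => (hf i).comap_le) h.iIndep hst) hU.comap_le hV.comap_le

lemma lintegral_lintegral_eq_lintegral_prod_map [IsFiniteMeasure μ] {X : Ω → β} {Y : Ω → γ}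
    (hX : Measurable X) (hY : Measurable Y) {g : β × γ → ℝ≥0∞} (hg : Measurable g) :
    ∫⁻ ω, ∫⁻ ω', g (X ω, Y ω') ∂μ ∂μ = ∫⁻ z, g z ∂((μ.map X).prod (μ.map Y)) := by
  rw [lintegral_prod _ hg.aemeasurable, lintegral_map (hg.lintegral_prod_right') hX]
  exact lintegral_congr fun ω => (lintegral_map (hg.comp measurable_prodMk_left) hY).symm

lemma ProbabilityTheory.IndepFun.lintegral_eq_lintegral_lintegral [IsFiniteMeasure μ]
    {X : Ω → β} {Y : Ω → γ} (h : IndepFun X Y μ) (hX : Measurable X) (hY : Measurable Y)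
    {g : β × γ → ℝ≥0∞} (hg : Measurable g) :
    ∫⁻ ω, g (X ω, Y ω) ∂μ = ∫⁻ ω, ∫⁻ ω', g (X ω, Y ω') ∂μ ∂μ := by
  rw [lintegral_lintegral_eq_lintegral_prod_map hX hY hg,
    ← (indepFun_iff_map_prod_eq_prod_map_map hX.aemeasurable hY.aemeasurable).1 h,
    lintegral_map hg (hX.prodMk hY)]

lemma ProbabilityTheory.IndepFun.lintegral_eq_lintegral_lintegral_of_identDistrib
    [IsFiniteMeasure μ] {X : Ω → β} {Y Y' : Ω → γ} (h : IndepFun X Y μ)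
    (hYY' : IdentDistrib Y Y' μ μ) (hX : Measurable X) (hY : Measurable Y)
    {g : β × γ → ℝ≥0∞} (hg : Measurable g) :
    ∫⁻ ω, g (X ω, Y ω) ∂μ = ∫⁻ ω, ∫⁻ ω', g (X ω, Y' ω') ∂μ ∂μ := by
  rw [h.lintegral_eq_lintegral_lintegral hX hY hg]
  exact lintegral_congr fun ω => (hYY'.comp (hg.comp measurable_prodMk_left)).lintegral_eq

end Independence

section Majorant

open Real

variable {Ω : Type*} (A B : ℕ → Ω → ℝ)

-- Here `B k` plays the role of `Bₖ₊₁`, so `tailSum A B 0 n` is the `n`-th partial sum of `X*`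
-- and `tailSum A B j` is the same perpetuity shifted by `j`.
def tailSum (j n : ℕ) (ω : Ω) : ℝ :=
  ∑ k ∈ range n, (∏ i ∈ range (k + 1), A (j + i) ω) * B (j + k) ω

lemma tailSum_succ (j n : ℕ) (ω : Ω) :
    tailSum A B j (n + 1) ω = A j ω * (B j ω + tailSum A B (j + 1) n ω) := by
  rw [tailSum, sum_range_succ', add_comm, tailSum, mul_add, mul_sum]
  congr 1
  · simp
  · refine sum_congr rfl fun k _ => ?_
    rw [prod_range_succ' _ (k + 1), add_zero, add_right_comm, mul_comm _ (A j ω), mul_assoc]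
    simp only [add_assoc, add_comm 1]

lemma measurable_tailSum {m : MeasurableSpace Ω} {j : ℕ}
    (hA : ∀ i, j ≤ i → Measurable[m] (A i)) (hB : ∀ i, j ≤ i → Measurable[m] (B i)) (n : ℕ) :
    Measurable[m] (tailSum A B j n) :=
  Finset.measurable_sum _ fun k _ =>
    (Finset.measurable_prod _ fun i _ => hA _ (by omega)).mul (hB _ (by omega))

def weight (r : ℝ) (z : ℝ × ℝ) : ℝ := r * z.1 * max z.2 0

noncomputable def damp (c a : ℝ) : ℝ := if a ≤ c then c else 1

@[fun_prop]
lemma measurable_weight (r : ℝ) : Measurable (weight r) := by unfold weight; fun_prop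

@[fun_prop]
lemma measurable_damp (c : ℝ) : Measurable (damp c) :=
  Measurable.ite measurableSet_Iic measurable_const measurable_const

lemma damp_nonneg {c : ℝ} (hc : 0 ≤ c) (a : ℝ) : 0 ≤ damp c a := by
  unfold damp; split_ifs <;> linarith

lemma damp_le_one {c : ℝ} (hc : c ≤ 1) (a : ℝ) : damp c a ≤ 1 := by
  unfold damp; split_ifs <;> linarith

lemma le_damp {c a : ℝ} (ha : a ≤ 1) : a ≤ damp c a := by
  unfold damp; split_ifs <;> linarith

lemma weight_nonneg {r : ℝ} {z : ℝ × ℝ} (hr : 0 ≤ r) (hz : 0 ≤ z.1) : 0 ≤ weight r z :=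
  mul_nonneg (mul_nonneg hr hz) (le_max_right _ _)

lemma exp_weight_le_exp_add_one (r : ℝ) (z : ℝ × ℝ) :
    exp (weight r z) ≤ exp (r * z.1 * z.2) + 1 := by
  rcases le_total z.2 0 with h | h
  · simp only [weight, max_eq_right h, mul_zero, exp_zero]
    linarith [exp_pos (r * z.1 * z.2)]
  · simp only [weight, max_eq_left h]
    linarith

-- `majorant A B r c j n = ∑_{k<n} θⱼ⋯θⱼ₊ₖ₋₁ · weight r (Aⱼ₊ₖ, Bⱼ₊ₖ)` with `θᵢ = damp c (A i)`;
-- it dominates `r * tailSum A B j n` because `Aᵢ ≤ θᵢ`.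
noncomputable def majorant (r c : ℝ) : ℕ → ℕ → Ω → ℝ
  | _, 0 => 0
  | j, n + 1 => fun ω => weight r (A j ω, B j ω) + damp c (A j ω) * majorant r c (j + 1) n ω

variable {A B}

lemma eq_mul_add_liminf_tailSum {X : Ω → ℝ} {ω : Ω} (hA0 : A 0 ω ≠ 0)
    (hX : Tendsto (fun n => tailSum A B 0 n ω) atTop (𝓝 (X ω))) :
    X ω = A 0 ω * (B 0 ω + liminf (fun n => tailSum A B 1 n ω) atTop) := by
  have h : Tendsto (fun n => tailSum A B 1 n ω) atTop (𝓝 (X ω / A 0 ω - B 0 ω)) := by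
    refine (((hX.comp (tendsto_add_atTop_nat 1)).div_const (A 0 ω)).sub_const (B 0 ω)).congr
      fun n => ?_
    simp only [Function.comp_apply, tailSum_succ, zero_add]
    field_simp
    ring
  rw [h.liminf_eq]
  field_simp
  ring

lemma majorant_nonneg {r c : ℝ} {ω : Ω} (hA : ∀ i, 0 ≤ A i ω) (hr : 0 ≤ r) (hc : 0 ≤ c) :
    ∀ n j, 0 ≤ majorant A B r c j n ω
  | 0, _ => le_rfl
  | n + 1, j => add_nonneg (weight_nonneg (z := (A j ω, B j ω)) hr (hA j))
      (mul_nonneg (damp_nonneg hc _) (majorant_nonneg hA hr hc n (j + 1)))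

lemma mul_tailSum_le_majorant {r c : ℝ} {ω : Ω} (hA : ∀ i, A i ω ∈ Set.Ioo 0 1) (hr : 0 ≤ r)
    (hc : 0 ≤ c) : ∀ n j, r * tailSum A B j n ω ≤ majorant A B r c j n ω
  | 0, _ => by simp [tailSum, majorant]
  | n + 1, j => by
    obtain ⟨hA0, hA1⟩ := hA j
    have hd : A j ω ≤ damp c (A j ω) := le_damp hA1.le
    have hhead : r * (A j ω * B j ω) ≤ weight r (A j ω, B j ω) := by
      rw [weight, ← mul_assoc]
      exact mul_le_mul_of_nonneg_left (le_max_left _ _) (by positivity)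
    have htail : A j ω * (r * tailSum A B (j + 1) n ω)
        ≤ damp c (A j ω) * majorant A B r c (j + 1) n ω := by
      rcases le_or_gt 0 (r * tailSum A B (j + 1) n ω) with hpos | hneg
      · exact mul_le_mul hd (mul_tailSum_le_majorant hA hr hc n (j + 1)) hpos (hA0.le.trans hd)
      · exact (mul_nonpos_of_nonneg_of_nonpos hA0.le hneg.le).trans (mul_nonneg
          (damp_nonneg hc _) (majorant_nonneg (fun i => (hA i).1.le) hr hc n (j + 1)))
    calc r * tailSum A B j (n + 1) ω
        = r * (A j ω * B j ω) + A j ω * (r * tailSum A B (j + 1) n ω) := by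
          rw [tailSum_succ]; ring
      _ ≤ majorant A B r c j (n + 1) ω := add_le_add hhead htail

lemma measurable_majorant {m : MeasurableSpace Ω} (r c : ℝ) :
    ∀ n j, (∀ i, j ≤ i → Measurable[m] (A i)) → (∀ i, j ≤ i → Measurable[m] (B i)) →
      Measurable[m] (majorant A B r c j n)
  | 0, _, _, _ => measurable_const
  | n + 1, j, hA, hB => by
    have hAj := hA j le_rfl
    have hrest := measurable_majorant r c n (j + 1) (fun i hi => hA i (by omega))
      (fun i hi => hB i (by omega))
    exact ((measurable_weight r).comp (hAj.prodMk (hB j le_rfl))).add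
      (((measurable_damp c).comp hAj).mul hrest)

lemma ofReal_exp_le_liminf_majorant {r c : ℝ} {X : Ω → ℝ} {ω : Ω}
    (hA : ∀ i, A i ω ∈ Set.Ioo 0 1) (hr : 0 ≤ r) (hc : 0 ≤ c)
    (hX : Tendsto (fun n => tailSum A B 0 n ω) atTop (𝓝 (X ω))) :
    ENNReal.ofReal (exp (r * X ω))
      ≤ liminf (fun n => ENNReal.ofReal (exp (majorant A B r c 0 n ω))) atTop := by
  have hlim : Tendsto (fun n => ENNReal.ofReal (exp (r * tailSum A B 0 n ω))) atTop
      (𝓝 (ENNReal.ofReal (exp (r * X ω)))) :=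
    (ENNReal.continuous_ofReal.tendsto _).comp ((continuous_exp.tendsto _).comp (hX.const_mul r))
  rw [← hlim.liminf_eq]
  exact liminf_le_liminf (Eventually.of_forall fun n => ENNReal.ofReal_le_ofReal
    (exp_le_exp.2 (mul_tailSum_le_majorant hA hr hc n 0)))

end Majorant

section ExpBounds

open Real

variable {α : Type*} [MeasurableSpace α] {ν : Measure α}

lemma exists_setLIntegral_lt_one [IsFiniteMeasure ν] {f : α → ℝ} (hf : Measurable f)
    (hν : ∀ᵐ z ∂ν, f z < 1) {g : α → ℝ≥0∞} (hg : ∫⁻ z, g z ∂ν ≠ ∞) :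
    ∃ c, 0 < c ∧ c < 1 ∧ ∫⁻ z in {z | c < f z}, g z ∂ν < 1 := by
  have hinter : (⋂ t > (0 : ℝ), {z | 1 - t < f z}) = {z | 1 ≤ f z} := by
    ext z
    simp only [Set.mem_iInter, Set.mem_ofPred_eq]
    refine ⟨fun h => not_lt.1 fun hz => ?_, fun h t ht => by linarith⟩
    have := h (1 - f z) (by linarith)
    linarith
  have hnull : ν {z | 1 ≤ f z} = 0 := by
    rw [← ae_iff.1 hν]
    simp only [not_lt]
  have hmeas : Tendsto (fun t => ν {z | 1 - t < f z}) (𝓝[>] 0) (𝓝 0) := by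
    have := tendsto_measure_biInter_gt (μ := ν) (s := fun t => {z | 1 - t < f z}) (a := 0)
      (fun t _ => (measurableSet_lt measurable_const hf).nullMeasurableSet)
      (fun i j _ hij z hz => by simp only [Set.mem_ofPred_eq] at hz ⊢; linarith)
      ⟨1, one_pos, measure_ne_top _ _⟩
    rwa [hinter, hnull] at this
  obtain ⟨t, hlt, ht⟩ := (((tendsto_setLIntegral_zero hg hmeas).eventually
    (gt_mem_nhds one_pos)).and (Ioo_mem_nhdsGT one_pos)).exists
  exact ⟨1 - t, by linarith [ht.2], by linarith [ht.1], hlt⟩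

-- With `w = (1 - x) p + x (1 - a) ≥ m`, the choice of `K` and `1 + t ≤ eᵗ` give
-- `(1 - x) p + x b ≤ w e^{K(1-c)x}`.
lemma exp_mul_add_exp_mul_le {p q a b m K c x : ℝ} (hx0 : 0 ≤ x) (hx1 : x ≤ 1)
    (hpq : p + q = 1) (hm : 0 < m) (hmp : m ≤ p) (hma : m ≤ 1 - a) (hb : 0 ≤ b)
    (hK : K * (1 - c) * m = b) :
    ((1 - x) * q + x * a) * exp (K * x) + ((1 - x) * p + x * b) * exp (K * (c * x))
      ≤ exp (K * x) := by
  set w := (1 - x) * p + x * (1 - a)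
  have hw : m ≤ w := by nlinarith
  have hL : 0 ≤ K * (1 - c) * x := by
    refine mul_nonneg ?_ hx0
    by_contra! h
    nlinarith
  have hv : (1 - x) * p + x * b ≤ w * exp (K * (1 - c) * x) :=
    calc (1 - x) * p + x * b ≤ w + K * (1 - c) * x * m := by rw [← hK]; nlinarith
      _ ≤ w + K * (1 - c) * x * w := by gcongr
      _ = w * (K * (1 - c) * x + 1) := by ring
      _ ≤ w * exp (K * (1 - c) * x) := by gcongr; exacts [by linarith, add_one_le_exp _]
  have hsplit : exp (K * x) = exp (K * (1 - c) * x) * exp (K * (c * x)) := by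
    rw [← exp_add]; ring_nf
  calc ((1 - x) * q + x * a) * exp (K * x) + ((1 - x) * p + x * b) * exp (K * (c * x))
      ≤ ((1 - x) * q + x * a) * exp (K * x)
          + w * exp (K * (1 - c) * x) * exp (K * (c * x)) := by gcongr
    _ = exp (K * x) := by
        rw [mul_assoc, ← hsplit]; linear_combination (1 - x) * exp (K * x) * hpq

lemma setLIntegral_exp_mul_le [IsFiniteMeasure ν] {V : α → ℝ} (hV : Measurable V) (S : Set α)
    (hfin : ∫⁻ z in S, ENNReal.ofReal (exp (V z)) ∂ν ≠ ∞) {x : ℝ} (hx0 : 0 ≤ x) (hx1 : x ≤ 1) :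
    ∫⁻ z in S, ENNReal.ofReal (exp (x * V z)) ∂ν
      ≤ ENNReal.ofReal ((1 - x) * (ν S).toReal
          + x * (∫⁻ z in S, ENNReal.ofReal (exp (V z)) ∂ν).toReal) := by
  have hconv : ∀ z, ENNReal.ofReal (exp (x * V z))
      ≤ ENNReal.ofReal (1 - x) + ENNReal.ofReal x * ENNReal.ofReal (exp (V z)) := fun z => by
    rw [← ENNReal.ofReal_mul hx0, ← ENNReal.ofReal_add (by linarith) (by positivity)]
    refine ENNReal.ofReal_le_ofReal ?_
    simpa [smul_eq_mul] using convexOn_exp.2 (Set.mem_univ 0) (Set.mem_univ (V z))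
      (sub_nonneg.2 hx1) hx0 (by ring)
  calc ∫⁻ z in S, ENNReal.ofReal (exp (x * V z)) ∂ν
      ≤ ∫⁻ z in S, (ENNReal.ofReal (1 - x) + ENNReal.ofReal x * ENNReal.ofReal (exp (V z))) ∂ν :=
        lintegral_mono hconv
    _ = ENNReal.ofReal (1 - x) * ν S
          + ENNReal.ofReal x * ∫⁻ z in S, ENNReal.ofReal (exp (V z)) ∂ν := by
        rw [lintegral_add_left measurable_const, setLIntegral_const,
          lintegral_const_mul _ (by fun_prop)]
    _ = _ := by
        rw [ENNReal.ofReal_add (by positivity) (by positivity),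
          ENNReal.ofReal_mul (by linarith), ENNReal.ofReal_mul hx0,
          ENNReal.ofReal_toReal (measure_ne_top _ _), ENNReal.ofReal_toReal hfin]

lemma lintegral_mul_comp_damp {f : α → ℝ} (hf : Measurable f) (c : ℝ) (g : α → ℝ≥0∞)
    {h : ℝ → ℝ≥0∞} (h1 : h 1 ≠ ∞) (hc : h c ≠ ∞) :
    ∫⁻ z, g z * h (damp c (f z)) ∂ν
      = (∫⁻ z in {z | c < f z}, g z ∂ν) * h 1 + (∫⁻ z in {z | c < f z}ᶜ, g z ∂ν) * h c := by
  have hD : MeasurableSet {z | c < f z} := measurableSet_lt measurable_const hf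
  rw [← lintegral_add_compl _ hD, ← lintegral_mul_const' _ _ h1, ← lintegral_mul_const' _ _ hc]
  congr 1
  · refine setLIntegral_congr_fun hD fun z hz => ?_
    rw [damp, if_neg (not_le.2 hz)]
  · refine setLIntegral_congr_fun hD.compl fun z hz => ?_
    rw [damp, if_pos (not_lt.1 (Set.notMem_ofPred_iff.1 hz))]

lemma exists_lintegral_exp_mul_damp_le [IsProbabilityMeasure ν] {f V : α → ℝ}
    (hf : Measurable f) (hV : Measurable V) (hV0 : ∀ᵐ z ∂ν, 0 ≤ V z)
    (hfin : ∫⁻ z, ENNReal.ofReal (exp (V z)) ∂ν ≠ ∞) {c : ℝ} (hc : c < 1)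
    (hlt : ∫⁻ z in {z | c < f z}, ENNReal.ofReal (exp (V z)) ∂ν < 1) :
    ∃ K, 0 ≤ K ∧ ∀ x, 0 ≤ x → x ≤ 1 →
      ∫⁻ z, ENNReal.ofReal (exp (x * V z)) * ENNReal.ofReal (exp (K * (damp c (f z) * x))) ∂ν
        ≤ ENNReal.ofReal (exp (K * x)) := by
  set D := {z | c < f z}
  have hD : MeasurableSet D := measurableSet_lt measurable_const hf
  have hfinD : ∀ S, ∫⁻ z in S, ENNReal.ofReal (exp (V z)) ∂ν ≠ ∞ :=
    fun S => ne_top_of_le_ne_top hfin (setLIntegral_le_lintegral _ _)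
  set q := (ν D).toReal
  set p := (ν Dᶜ).toReal
  set a := (∫⁻ z in D, ENNReal.ofReal (exp (V z)) ∂ν).toReal
  set b := (∫⁻ z in Dᶜ, ENNReal.ofReal (exp (V z)) ∂ν).toReal
  have hpq : p + q = 1 := by
    rw [← ENNReal.toReal_add (measure_ne_top _ _) (measure_ne_top _ _), add_comm,
      measure_add_measure_compl hD, measure_univ, ENNReal.toReal_one]
  have hqa : q ≤ a := by
    refine ENNReal.toReal_mono (hfinD D) ?_
    rw [← setLIntegral_one]
    refine setLIntegral_mono_ae (by fun_prop) (hV0.mono fun z hz _ => ?_)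
    exact ENNReal.one_le_ofReal.2 (one_le_exp hz)
  have ha : a < 1 := ENNReal.toReal_lt_of_lt_ofReal (by simpa using hlt)
  have hm : 0 < min p (1 - a) :=
    lt_min (by linarith [ENNReal.toReal_nonneg (a := ν D)]) (by linarith)
  refine ⟨b / ((1 - c) * min p (1 - a)), by positivity, fun x hx0 hx1 => ?_⟩
  set K := b / ((1 - c) * min p (1 - a))
  have hK : K * (1 - c) * min p (1 - a) = b := by
    simp only [K]; field_simp [(by linarith : (0 : ℝ) < 1 - c).ne']
  have h1x : 0 ≤ 1 - x := by linarith
  have hu : 0 ≤ (1 - x) * q + x * a :=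
    add_nonneg (mul_nonneg h1x ENNReal.toReal_nonneg) (mul_nonneg hx0 ENNReal.toReal_nonneg)
  have hv : 0 ≤ (1 - x) * p + x * b :=
    add_nonneg (mul_nonneg h1x ENNReal.toReal_nonneg) (mul_nonneg hx0 ENNReal.toReal_nonneg)
  rw [lintegral_mul_comp_damp hf c _ (h := fun θ => ENNReal.ofReal (exp (K * (θ * x))))
    ENNReal.ofReal_ne_top ENNReal.ofReal_ne_top, one_mul]
  calc (∫⁻ z in D, ENNReal.ofReal (exp (x * V z)) ∂ν) * ENNReal.ofReal (exp (K * x))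
        + (∫⁻ z in Dᶜ, ENNReal.ofReal (exp (x * V z)) ∂ν) * ENNReal.ofReal (exp (K * (c * x)))
      ≤ ENNReal.ofReal ((1 - x) * q + x * a) * ENNReal.ofReal (exp (K * x))
        + ENNReal.ofReal ((1 - x) * p + x * b) * ENNReal.ofReal (exp (K * (c * x))) := by
        gcongr
        · exact setLIntegral_exp_mul_le hV D (hfinD D) hx0 hx1
        · exact setLIntegral_exp_mul_le hV Dᶜ (hfinD Dᶜ) hx0 hx1
    _ = ENNReal.ofReal (((1 - x) * q + x * a) * exp (K * x)
          + ((1 - x) * p + x * b) * exp (K * (c * x))) := by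
        rw [← ENNReal.ofReal_mul hu, ← ENNReal.ofReal_mul hv,
          ← ENNReal.ofReal_add (by positivity) (by positivity)]
    _ ≤ ENNReal.ofReal (exp (K * x)) :=
        ENNReal.ofReal_le_ofReal (exp_mul_add_exp_mul_le hx0 hx1 hpq hm (min_le_left _ _)
          (min_le_right _ _) ENNReal.toReal_nonneg hK)

lemma ofReal_exp_mul_measure_le_lintegral_exp {T : α → ℝ} (hT : Measurable T) {r a M : ℝ}
    (hr : 0 ≤ r) (ha0 : 0 ≤ a) (ha1 : a ≤ 1) (hM : 0 ≤ M) :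
    ENNReal.ofReal (exp (-(r * M))) * ν {z | -M ≤ T z}
      ≤ ∫⁻ z, ENNReal.ofReal (exp (r * a * T z)) ∂ν :=
  calc ENNReal.ofReal (exp (-(r * M))) * ν {z | -M ≤ T z}
      = ∫⁻ _ in {z | -M ≤ T z}, ENNReal.ofReal (exp (-(r * M))) ∂ν :=
        (setLIntegral_const _ _).symm
    _ ≤ ∫⁻ z in {z | -M ≤ T z}, ENNReal.ofReal (exp (r * a * T z)) ∂ν :=
        setLIntegral_mono (by fun_prop) fun z (hz : -M ≤ T z) => by
          refine ENNReal.ofReal_le_ofReal (exp_le_exp.2 ?_)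
          nlinarith [mul_le_mul_of_nonneg_left hz (mul_nonneg hr ha0), mul_nonneg hr hM]
    _ ≤ _ := setLIntegral_le_lintegral _ _

end ExpBounds

section Perpetuity

open Real

variable {Ω : Type*} [MeasureSpace Ω] {A B : ℕ → Ω → ℝ}

lemma indepFun_pair_of_measurable_future (hA : ∀ n, Measurable (A n))
    (hB : ∀ n, Measurable (B n)) (hI : iIndepFun (interleave A B) ℙ) (j : ℕ) {U : Ω → ℝ}
    (hU : Measurable[blockSigma (interleave A B) {p | j < p.1}] U) :
    IndepFun (fun ω => (A j ω, B j ω)) U ℙ :=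
  indepFun_of_measurable_blockSigma (measurable_interleave hA hB) hI (s := {p | p.1 = j})
    (Set.disjoint_left.2 fun p hp hp' => by simp_all)
    ((measurable_blockSigma (s := {p : ℕ × Bool | p.1 = j}) (i := (j, false)) rfl).prodMk
      (measurable_blockSigma (s := {p : ℕ × Bool | p.1 = j}) (i := (j, true)) rfl)) hU

lemma exists_measure_pos_neg_le [IsProbabilityMeasure (ℙ : Measure Ω)] (T : Ω → ℝ) :
    ∃ M : ℕ, 0 < ℙ {ω | -(M : ℝ) ≤ T ω} := by
  refine exists_measure_pos_of_not_measure_iUnion_null ?_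
  rw [Set.iUnion_eq_univ_iff.2 fun ω => ?_, measure_univ]
  · exact one_ne_zero
  obtain ⟨M, hM⟩ := exists_nat_ge (-T ω)
  exact ⟨M, by simp only [Set.mem_ofPred_eq]; linarith⟩

lemma lintegral_exp_majorant_le [IsProbabilityMeasure (ℙ : Measure Ω)]
    (hA : ∀ n, Measurable (A n)) (hB : ∀ n, Measurable (B n)) (hI : iIndepFun (interleave A B) ℙ)
    (hZ : ∀ j, IdentDistrib (fun ω => (A j ω, B j ω)) (fun ω => (A 0 ω, B 0 ω)) ℙ ℙ)
    {r c K : ℝ} (hc0 : 0 ≤ c) (hc1 : c ≤ 1) (hK0 : 0 ≤ K)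
    (hK : ∀ x, 0 ≤ x → x ≤ 1 →
      ∫⁻ z, ENNReal.ofReal (exp (x * weight r z)) * ENNReal.ofReal (exp (K * (damp c z.1 * x)))
        ∂(Measure.map (fun ω => (A 0 ω, B 0 ω)) ℙ) ≤ ENNReal.ofReal (exp (K * x))) :
    ∀ n j x, 0 ≤ x → x ≤ 1 →
      ∫⁻ ω, ENNReal.ofReal (exp (x * majorant A B r c j n ω)) ≤ ENNReal.ofReal (exp (K * x))
  | 0, j, x, hx0, _ => by
    simpa [majorant] using ENNReal.one_le_ofReal.2 (one_le_exp (mul_nonneg hK0 hx0))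
  | n + 1, j, x, hx0, hx1 => by
    set M := majorant A B r c (j + 1) n
    have hZm : Measurable fun ω => (A j ω, B j ω) := (hA j).prodMk (hB j)
    have hMm : Measurable M :=
      measurable_majorant r c n (j + 1) (fun i _ => hA i) (fun i _ => hB i)
    have hind := indepFun_pair_of_measurable_future hA hB hI j (U := M)
      (measurable_majorant r c n (j + 1) (fun i hi => measurable_blockSigma (i := (i, false)) hi)
        (fun i hi => measurable_blockSigma (i := (i, true)) hi))
    calc ∫⁻ ω, ENNReal.ofReal (exp (x * majorant A B r c j (n + 1) ω))
        = ∫⁻ ω, ∫⁻ ω', ENNReal.ofReal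
            (exp (x * (weight r (A j ω, B j ω) + damp c (A j ω) * M ω'))) :=
          hind.lintegral_eq_lintegral_lintegral hZm hMm
            (g := fun w => ENNReal.ofReal (exp (x * (weight r w.1 + damp c w.1.1 * w.2))))
            (by fun_prop)
      _ = ∫⁻ ω, ENNReal.ofReal (exp (x * weight r (A j ω, B j ω)))
            * ∫⁻ ω', ENNReal.ofReal (exp ((damp c (A j ω) * x) * M ω')) := by
          refine lintegral_congr fun ω => ?_
          rw [← lintegral_const_mul _ (by fun_prop)]
          refine lintegral_congr fun ω' => ?_
          rw [← ENNReal.ofReal_mul (exp_nonneg _), ← exp_add]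
          ring_nf
      _ ≤ ∫⁻ ω, ENNReal.ofReal (exp (x * weight r (A j ω, B j ω)))
            * ENNReal.ofReal (exp (K * (damp c (A j ω) * x))) := by
          gcongr with ω
          exact lintegral_exp_majorant_le hA hB hI hZ hc0 hc1 hK0 hK n (j + 1) _
            (mul_nonneg (damp_nonneg hc0 _) hx0) (mul_le_one₀ (damp_le_one hc1 _) hx0 hx1)
      _ = ∫⁻ z, ENNReal.ofReal (exp (x * weight r z))
            * ENNReal.ofReal (exp (K * (damp c z.1 * x)))
            ∂(Measure.map (fun ω => (A 0 ω, B 0 ω)) ℙ) := by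
          rw [← (hZ j).map_eq, lintegral_map (by fun_prop) hZm]
      _ ≤ ENNReal.ofReal (exp (K * x)) := hK x hx0 hx1

lemma lintegral_exp_mul_lt_top_of_lintegral_exp_lt_top [IsProbabilityMeasure (ℙ : Measure Ω)]
    (hA : ∀ n, Measurable (A n)) (hB : ∀ n, Measurable (B n)) (hI : iIndepFun (interleave A B) ℙ)
    (hA01 : ∀ᵐ ω, A 0 ω ∈ Set.Ioo 0 1) {X : Ω → ℝ}
    (hX : ∀ᵐ ω, Tendsto (fun n => tailSum A B 0 n ω) atTop (𝓝 (X ω))) {r : ℝ} (hr : 0 ≤ r)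
    (hfin : ∫⁻ ω, ENNReal.ofReal (exp (r * X ω)) < ∞) :
    ∫⁻ ω, ENNReal.ofReal (exp (r * A 0 ω * B 0 ω)) < ∞ := by
  set T := fun ω => liminf (fun n => tailSum A B 1 n ω) atTop
  have hTm : Measurable T :=
    Measurable.liminf (measurable_tailSum A B (fun i _ => hA i) (fun i _ => hB i))
  have hind := indepFun_pair_of_measurable_future hA hB hI 0 (U := T)
    (Measurable.liminf (measurable_tailSum A B
      (fun i hi => measurable_blockSigma (i := (i, false)) hi)
      (fun i hi => measurable_blockSigma (i := (i, true)) hi)))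
  obtain ⟨M, hM⟩ := exists_measure_pos_neg_le T
  set C := ENNReal.ofReal (exp (-(r * M))) * ℙ {ω | -(M : ℝ) ≤ T ω}
  have hC : C ≠ 0 := mul_ne_zero (ENNReal.ofReal_pos.2 (exp_pos _)).ne' hM.ne'
  have hCtop : C ≠ ∞ := ENNReal.mul_ne_top ENNReal.ofReal_ne_top (measure_ne_top _ _)
  have key : (∫⁻ ω, ENNReal.ofReal (exp (r * A 0 ω * B 0 ω))) * C
      ≤ ∫⁻ ω, ENNReal.ofReal (exp (r * X ω)) :=
    calc (∫⁻ ω, ENNReal.ofReal (exp (r * A 0 ω * B 0 ω))) * C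
        = ∫⁻ ω, ENNReal.ofReal (exp (r * A 0 ω * B 0 ω)) * C :=
          (lintegral_mul_const' _ _ hCtop).symm
      _ ≤ ∫⁻ ω, ENNReal.ofReal (exp (r * A 0 ω * B 0 ω))
            * ∫⁻ ω', ENNReal.ofReal (exp (r * A 0 ω * T ω')) :=
          lintegral_mono_ae (hA01.mono fun ω hω => by
            gcongr
            exact ofReal_exp_mul_measure_le_lintegral_exp hTm hr hω.1.le hω.2.le M.cast_nonneg)
      _ = ∫⁻ ω, ∫⁻ ω', ENNReal.ofReal (exp (r * (A 0 ω * (B 0 ω + T ω')))) := by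
          refine lintegral_congr fun ω => ?_
          rw [← lintegral_const_mul _ (by fun_prop)]
          refine lintegral_congr fun ω' => ?_
          rw [← ENNReal.ofReal_mul (exp_nonneg _), ← exp_add]
          ring_nf
      _ = ∫⁻ ω, ENNReal.ofReal (exp (r * (A 0 ω * (B 0 ω + T ω)))) :=
          (hind.lintegral_eq_lintegral_lintegral ((hA 0).prodMk (hB 0)) hTm
            (g := fun w => ENNReal.ofReal (exp (r * (w.1.1 * (w.1.2 + w.2))))) (by fun_prop)).symm
      _ = ∫⁻ ω, ENNReal.ofReal (exp (r * X ω)) := by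
          refine lintegral_congr_ae ((hA01.and hX).mono fun ω hω => ?_)
          simp only [eq_mul_add_liminf_tailSum hω.1.1.ne' hω.2, T]
  exact ENNReal.lt_top_of_mul_ne_top_left (ne_top_of_le_ne_top hfin.ne key) hC

lemma lintegral_exp_lt_top_of_lintegral_exp_mul_lt_top [IsProbabilityMeasure (ℙ : Measure Ω)]
    (hA : ∀ n, Measurable (A n)) (hB : ∀ n, Measurable (B n)) (hI : iIndepFun (interleave A B) ℙ)
    (hZ : ∀ j, IdentDistrib (fun ω => (A j ω, B j ω)) (fun ω => (A 0 ω, B 0 ω)) ℙ ℙ)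
    (hA01 : ∀ i, ∀ᵐ ω, A i ω ∈ Set.Ioo 0 1) {X : Ω → ℝ}
    (hX : ∀ᵐ ω, Tendsto (fun n => tailSum A B 0 n ω) atTop (𝓝 (X ω))) {r : ℝ} (hr : 0 ≤ r)
    (hfin : ∫⁻ ω, ENNReal.ofReal (exp (r * A 0 ω * B 0 ω)) < ∞) :
    ∫⁻ ω, ENNReal.ofReal (exp (r * X ω)) < ∞ := by
  set ν := Measure.map (fun ω => (A 0 ω, B 0 ω)) ℙ
  have hZ0 : Measurable fun ω => (A 0 ω, B 0 ω) := (hA 0).prodMk (hB 0)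
  have : IsProbabilityMeasure ν := Measure.isProbabilityMeasure_map hZ0.aemeasurable
  have hν : ∀ᵐ z ∂ν, z.1 ∈ Set.Ioo 0 1 :=
    (ae_map_iff hZ0.aemeasurable (measurable_fst measurableSet_Ioo)).2 (hA01 0)
  have hVfin : ∫⁻ z, ENNReal.ofReal (exp (weight r z)) ∂ν ≠ ∞ := by
    rw [lintegral_map (by fun_prop) hZ0]
    refine ne_top_of_le_ne_top ?_ (lintegral_mono fun ω =>
      ENNReal.ofReal_le_ofReal (exp_weight_le_exp_add_one r (A 0 ω, B 0 ω)))
    simp_rw [ENNReal.ofReal_add (exp_nonneg _) zero_le_one]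
    rw [lintegral_add_right _ measurable_const]
    simpa using hfin.ne
  obtain ⟨c, hc0, hc1, hlt⟩ := exists_setLIntegral_lt_one measurable_fst
    (hν.mono fun z hz => hz.2) hVfin
  obtain ⟨K, hK0, hK⟩ := exists_lintegral_exp_mul_damp_le measurable_fst (measurable_weight r)
    (hν.mono fun z hz => weight_nonneg hr hz.1.le) hVfin hc1 hlt
  calc ∫⁻ ω, ENNReal.ofReal (exp (r * X ω))
      ≤ ∫⁻ ω, liminf (fun n => ENNReal.ofReal (exp (majorant A B r c 0 n ω))) atTop :=
        lintegral_mono_ae (by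
          filter_upwards [ae_all_iff.2 hA01, hX] with ω hω hXω
          exact ofReal_exp_le_liminf_majorant hω hr hc0.le hXω)
    _ ≤ liminf (fun n => ∫⁻ ω, ENNReal.ofReal (exp (majorant A B r c 0 n ω))) atTop :=
        lintegral_liminf_le fun n => (measurable_majorant r c n 0 (fun i _ => hA i)
          (fun i _ => hB i)).exp.ennreal_ofReal
    _ ≤ ENNReal.ofReal (exp K) := by
        refine liminf_le_of_frequently_le (Frequently.of_forall fun n => ?_)
        simpa using lintegral_exp_majorant_le hA hB hI hZ hc0.le hc1.le hK0 hK n 0 1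
          zero_le_one le_rfl
    _ < ∞ := ENNReal.ofReal_lt_top

end Perpetuity

theorem stmt_7_general
    {Ω : Type*} [MeasureSpace Ω] [IsProbabilityMeasure (ℙ : Measure Ω)]
    (A B : ℕ → Ω → ℝ) (Xstar : Ω → ℝ)
    (hA : ∀ n, Measurable (A n)) (hB : ∀ n, Measurable (B n))
    (hindep : iIndepFun (fun n ω => (A n ω, B n ω)) ℙ)
    (hident : ∀ n, IdentDistrib (fun ω => (A n ω, B n ω)) (fun ω => (A 0 ω, B 0 ω)) ℙ ℙ)
    (hindepAB : IndepFun (A 0) (B 0) ℙ)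
    (hXsconv : ∀ᵐ ω ∂ℙ, Tendsto
      (fun n => ∑ k ∈ Finset.range n, (∏ i ∈ Finset.range (k + 1), A i ω) * B (k + 1) ω)
      atTop (nhds (Xstar ω)))
    (hA01 : ℙ {ω | A 0 ω ∈ Set.Ioo (0 : ℝ) 1} = 1)
    (r : ℝ) (hr : 0 < r) :
    (∫⁻ ω, ENNReal.ofReal (Real.exp (r * Xstar ω)) ∂ℙ < ⊤) ↔
      (∫⁻ ω, (∫⁻ ω', ENNReal.ofReal (Real.exp ((r * A 0 ω) * B 0 ω')) ∂ℙ) ∂ℙ < ⊤) := by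
  have hAB : iIndepFun (interleave A B) ℙ := iIndepFun_interleave hA hB hindep fun n =>
    indepFun_of_identDistrib_pair hindepAB (hident n).symm
  have hidA n : IdentDistrib (A n) (A 0) ℙ ℙ := (hident n).comp measurable_fst
  have hidB n : IdentDistrib (B n) (B 0) ℙ ℙ := (hident n).comp measurable_snd
  have hAB' m n : IndepFun (A m) (B (n + 1)) ℙ :=
    hAB.indepFun (i := (m, false)) (j := (n + 1, true)) (by simp)
  have hZ j : IdentDistrib (fun ω => (A j ω, B (j + 1) ω)) (fun ω => (A 0 ω, B (0 + 1) ω)) ℙ ℙ :=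
    (hidA j).prodMk ((hidB (j + 1)).trans (hidB 1).symm) (hAB' j j) (hAB' 0 0)
  have hA01' i : ∀ᵐ ω, A i ω ∈ Set.Ioo 0 1 := by
    refine (hidA i).symm.ae_mem_snd measurableSet_Ioo ?_
    rw [ae_iff]
    exact (prob_compl_eq_zero_iff (hA 0 measurableSet_Ioo)).2 hA01
  have hX : ∀ᵐ ω, Tendsto (fun n => tailSum A (fun n => B (n + 1)) 0 n ω) atTop
      (𝓝 (Xstar ω)) := by
    simpa [tailSum] using hXsconv
  have hI := hAB.interleave_comp_right (e := (· + 1)) (add_left_injective 1)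
  rw [← (hAB' 0 0).lintegral_eq_lintegral_lintegral_of_identDistrib (hidB 1) (hA 0) (hB 1)
    (g := fun w => ENNReal.ofReal (Real.exp (r * w.1 * w.2))) (by fun_prop)]
  exact ⟨lintegral_exp_mul_lt_top_of_lintegral_exp_lt_top hA (fun n => hB _) hI (hA01' 0) hX hr.le,
    lintegral_exp_lt_top_of_lintegral_exp_mul_lt_top hA (fun n => hB _) hI hZ hA01' hX hr.le⟩

theorem stmt_7
    {Ω : Type*} [MeasureSpace Ω] [IsProbabilityMeasure (ℙ : Measure Ω)]
    (A B : ℕ → Ω → ℝ) (X Xstar : Ω → ℝ)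
    (hA : ∀ n, Measurable (A n)) (hB : ∀ n, Measurable (B n))
    (hX : Measurable X) (hXs : Measurable Xstar)
    (hindep : iIndepFun (fun n ω => (A n ω, B n ω)) ℙ)
    (hident : ∀ n, IdentDistrib (fun ω => (A n ω, B n ω)) (fun ω => (A 0 ω, B 0 ω)) ℙ ℙ)
    (hindepAB : IndepFun (A 0) (B 0) ℙ)
    (hB0 : ℙ {ω | B 0 ω = 0} < 1)
    (hXconv : ∀ᵐ ω ∂ℙ, Tendsto
      (fun n => ∑ k ∈ Finset.range n, (∏ i ∈ Finset.range k, A i ω) * B k ω)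
      atTop (nhds (X ω)))
    (hXsconv : ∀ᵐ ω ∂ℙ, Tendsto
      (fun n => ∑ k ∈ Finset.range n, (∏ i ∈ Finset.range (k + 1), A i ω) * B (k + 1) ω)
      atTop (nhds (Xstar ω)))
    (hA01 : ℙ {ω | A 0 ω ∈ Set.Ioo (0 : ℝ) 1} = 1)
    (r : ℝ) (hr : 0 < r) :
    (∫⁻ ω, ENNReal.ofReal (Real.exp (r * Xstar ω)) ∂ℙ < ⊤) ↔
      (∫⁻ ω, (∫⁻ ω', ENNReal.ofReal (Real.exp ((r * A 0 ω) * B 0 ω')) ∂ℙ) ∂ℙ < ⊤) :=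
  stmt_7_general A B Xstar hA hB hindep hident hindepAB hXsconv hA01 r hr
end

section
/- Assume that A and B are independent, P{A=1}∈[0,1), P{B=0}<1, the perpetuity X=∑_{k≥1}Π_{k-1}B_k converges a.s., and one of the following holds: (a) P{A∈(0,1]}=1, or (b) P{A∈(−1,0)}=1, or (c) P{|A|∈(0,1]}=1 and P{A=−1}∈(0,1). Suppose P{B>x} ~ g(x)e^{−bx} as x→∞ for some b>0 and a function g such that x↦g(log x) is slowly varying at ∞ (i.e., for every c>0, g(log(cx))/g(log x)→1 as x→∞) and limsup_{x→∞} (sup_{1≤y≤x} g(y))/g(x) < ∞. If E[e^{bX*}]<∞, where X*:=∑_{k≥1}Π_k B_{k+1}=A_1B_2+A_1A_2B_3+⋯, then P{X>x} ~ E[e^{bX*}]·P{B>x} as x→∞, i.e., lim_{x→∞} P{X>x}/P{B>x} = E[e^{bX*}]. -/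
/-!
Since `X = B₀ + X*` almost surely and `X*` is a function of `A₀` and the shifted sequence
`(A_{n+1}, B_{n+1})`, the variable `B₀` is independent of `X*`, so `P{X > x} = E r(x - X*)` with
`r` the tail of `B`. The hypotheses on `g` give `r(x - y)/r(x) → e^{by}` pointwise, and the
domination `r(x - y)/r(x) ≤ C (1 + e^{by})` for large `x`; dominated convergence concludes.
-/

open MeasureTheory ProbabilityTheory Filter Finset Topology

lemma eventually_pos_and_half_le_and_le_two_mul {α : Type*} {l : Filter α} {u v : α → ℝ}
    (hu : ∀ x, 0 ≤ u x) (h : Tendsto (fun x => u x / v x) l (𝓝 1)) :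
    ∀ᶠ x in l, 0 < v x ∧ v x / 2 ≤ u x ∧ u x ≤ 2 * v x := by
  filter_upwards [h (Ioo_mem_nhds (by norm_num : (1 / 2 : ℝ) < 1) one_lt_two)]
    with x ⟨hlo, hhi⟩
  have hv : 0 < v x := by
    by_contra! hv
    linarith [div_nonpos_of_nonneg_of_nonpos (hu x) hv]
  refine ⟨hv, ?_, ?_⟩
  · linarith [(lt_div_iff₀ hv).mp hlo]
  · linarith [(div_lt_iff₀ hv).mp hhi]

lemma exists_pos_eventually_le_of_div_le {g : ℝ → ℝ} {M : ℝ}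
    (hM : ∀ᶠ x in atTop, ∀ y ∈ Set.Icc (1 : ℝ) x, g y / g x ≤ M)
    (hpos : ∀ᶠ x in atTop, 0 < g x) : ∃ δ > 0, ∀ᶠ x in atTop, δ ≤ g x := by
  obtain ⟨y₀, hy₀, hy₀1⟩ := (hpos.and (eventually_ge_atTop 1)).exists
  obtain ⟨x, hMx, hx, hxy⟩ := (hM.and (hpos.and (eventually_ge_atTop y₀))).exists
  have hMpos : 0 < M := (div_pos hy₀ hx).trans_le (hMx y₀ ⟨hy₀1, hxy⟩)
  refine ⟨g y₀ / M, div_pos hy₀ hMpos, ?_⟩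
  filter_upwards [hM, hpos, eventually_ge_atTop y₀] with x hMx hx hxy
  rw [div_le_iff₀ hMpos, mul_comm]
  exact (div_le_iff₀ hx).mp (hMx y₀ ⟨hy₀1, hxy⟩)

lemma tendsto_comp_sub_div_self_of_comp_log {g : ℝ → ℝ}
    (hg : ∀ c : ℝ, 0 < c → Tendsto (fun x => g (Real.log (c * x)) / g (Real.log x)) atTop (𝓝 1))
    (y : ℝ) : Tendsto (fun x => g (x - y) / g x) atTop (𝓝 1) := by
  refine ((hg _ (Real.exp_pos (-y))).comp Real.tendsto_exp_atTop).congr fun x => ?_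
  simp only [Function.comp_apply, ← Real.exp_add, Real.log_exp, neg_add_eq_sub]

lemma mul_exp_sub_div_mul_exp (g : ℝ → ℝ) (b x y : ℝ) (hg : g x ≠ 0) :
    g (x - y) * Real.exp (-b * (x - y)) / (g x * Real.exp (-b * x)) =
      g (x - y) / g x * Real.exp (b * y) := by
  rw [show -b * (x - y) = b * y + -b * x by ring, Real.exp_add]
  field_simp

section ExponentialTail

variable {r g : ℝ → ℝ} {b : ℝ}

lemma tendsto_comp_sub_div_self_of_tail (hr : ∀ t, 0 ≤ r t)
    (htail : Tendsto (fun x => r x / (g x * Real.exp (-b * x))) atTop (𝓝 1))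
    (hg : ∀ y, Tendsto (fun x => g (x - y) / g x) atTop (𝓝 1)) (y : ℝ) :
    Tendsto (fun x => r (x - y) / r x) atTop (𝓝 (Real.exp (b * y))) := by
  have hshift : Tendsto (fun x => x - y) atTop atTop :=
    tendsto_atTop_add_const_right _ _ tendsto_id
  have hbounds := eventually_pos_and_half_le_and_le_two_mul hr htail
  have hprod := ((htail.comp hshift).mul ((hg y).mul_const (Real.exp (b * y)))).mul
    (htail.inv₀ one_ne_zero)
  rw [one_mul, one_mul, inv_one, mul_one] at hprod
  refine hprod.congr' ?_
  filter_upwards [hbounds, hshift.eventually hbounds] with x ⟨hφx, hrx_lo, _⟩ ⟨hφxy, _, _⟩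
  have hgx : g x ≠ 0 := ((mul_pos_iff_of_pos_right (Real.exp_pos _)).mp hφx).ne'
  have hgxy : g (x - y) ≠ 0 := ((mul_pos_iff_of_pos_right (Real.exp_pos _)).mp hφxy).ne'
  have hrx : r x ≠ 0 := ((half_pos hφx).trans_le hrx_lo).ne'
  simp only [Function.comp_apply, ← mul_exp_sub_div_mul_exp g b x y hgx]
  field_simp

lemma exists_eventually_comp_sub_div_le (hb : 0 ≤ b) (hr : ∀ t, 0 ≤ r t)
    (hr_anti : Antitone r) (hr_le : ∀ t, r t ≤ 1)
    (htail : Tendsto (fun x => r x / (g x * Real.exp (-b * x))) atTop (𝓝 1))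
    (hgsup : ∃ M : ℝ, ∀ᶠ x : ℝ in atTop, ∀ y ∈ Set.Icc (1 : ℝ) x, g y / g x ≤ M) :
    ∃ C, ∀ᶠ x in atTop, ∀ y, r (x - y) / r x ≤ C * (1 + Real.exp (b * y)) := by
  obtain ⟨M, hM⟩ := hgsup
  have hbounds := eventually_pos_and_half_le_and_le_two_mul hr htail
  have hgpos : ∀ᶠ x in atTop, 0 < g x :=
    hbounds.mono fun x hx => (mul_pos_iff_of_pos_right (Real.exp_pos _)).mp hx.1
  obtain ⟨δ, hδ, hδg⟩ := exists_pos_eventually_le_of_div_le hM hgpos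
  obtain ⟨x₀, hx₀⟩ := eventually_atTop.mp
    (hbounds.and (hgpos.and (hδg.and (hM.and (eventually_ge_atTop 1)))))
  set C := max 1 (max (4 * M) (2 / δ * Real.exp (b * x₀)))
  -- the three regimes `y ≤ 0`, `0 < y ≤ x - x₀` and `x - x₀ < y` give the three terms of `C`
  have hC : ∀ c ≤ C, ∀ y, c * Real.exp (b * y) ≤ C * (1 + Real.exp (b * y)) := fun c hc y => by
    nlinarith [Real.exp_pos (b * y), le_max_left 1 (max (4 * M) (2 / δ * Real.exp (b * x₀)))]
  refine ⟨C, ?_⟩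
  filter_upwards [eventually_ge_atTop x₀] with x hx y
  obtain ⟨⟨hφx, hrx_lo, -⟩, hgx, hδx, hMx, -⟩ := hx₀ x hx
  have hrx : 0 < r x := (half_pos hφx).trans_le hrx_lo
  rcases le_or_gt y 0 with hy | hy
  · calc r (x - y) / r x ≤ 1 := (div_le_one hrx).mpr (hr_anti (by linarith))
      _ ≤ C := le_max_left _ _
      _ ≤ C * (1 + Real.exp (b * y)) := le_mul_of_one_le_right (by positivity)
          (by linarith [Real.exp_pos (b * y)])
  rcases le_or_gt y (x - x₀) with hy' | hy'
  · obtain ⟨⟨hφxy, -, hrxy⟩, hgxy, -, -, hxy1⟩ := hx₀ (x - y) (by linarith)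
    calc r (x - y) / r x
        ≤ 2 * (g (x - y) * Real.exp (-b * (x - y))) / (g x * Real.exp (-b * x) / 2) :=
          div_le_div₀ (by positivity) hrxy (by positivity) hrx_lo
      _ = 4 * (g (x - y) / g x) * Real.exp (b * y) := by
          rw [mul_assoc, ← mul_exp_sub_div_mul_exp g b x y hgx.ne']; field_simp; ring
      _ ≤ 4 * M * Real.exp (b * y) := by gcongr; exact hMx _ ⟨hxy1, by linarith⟩
      _ ≤ C * (1 + Real.exp (b * y)) := hC _ ((le_max_left _ _).trans (le_max_right _ _)) y
  · calc r (x - y) / r x ≤ 1 / (δ * Real.exp (-b * x) / 2) := by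
          refine div_le_div₀ zero_le_one (hr_le _) (by positivity) (hrx_lo.trans' ?_)
          gcongr
      _ = 2 / δ * Real.exp (b * x) := by rw [neg_mul, Real.exp_neg]; field_simp
      _ ≤ 2 / δ * Real.exp (b * x₀) * Real.exp (b * y) := by
          rw [mul_assoc, ← Real.exp_add]; gcongr; nlinarith
      _ ≤ C * (1 + Real.exp (b * y)) := hC _ ((le_max_right _ _).trans (le_max_right _ _)) y

theorem tendsto_integral_comp_sub_div (μ : Measure ℝ) [IsFiniteMeasure μ] (hb : 0 ≤ b)
    (hr : ∀ t, 0 ≤ r t) (hr_anti : Antitone r) (hr_le : ∀ t, r t ≤ 1)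
    (htail : Tendsto (fun x => r x / (g x * Real.exp (-b * x))) atTop (𝓝 1))
    (hg : ∀ y, Tendsto (fun x => g (x - y) / g x) atTop (𝓝 1))
    (hgsup : ∃ M : ℝ, ∀ᶠ x : ℝ in atTop, ∀ y ∈ Set.Icc (1 : ℝ) x, g y / g x ≤ M)
    (hexp : Integrable (fun y => Real.exp (b * y)) μ) :
    Tendsto (fun x => (∫ y, r (x - y) ∂μ) / r x) atTop (𝓝 (∫ y, Real.exp (b * y) ∂μ)) := by
  obtain ⟨C, hC⟩ := exists_eventually_comp_sub_div_le hb hr hr_anti hr_le htail hgsup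
  have hmeas : ∀ x, AEStronglyMeasurable (fun y => r (x - y) / r x) μ := fun x =>
    (hr_anti.measurable.comp (measurable_const.sub measurable_id)).div_const _
      |>.aestronglyMeasurable
  have hdom : ∀ᶠ x in atTop, ∀ᵐ y ∂μ, ‖r (x - y) / r x‖ ≤ C * (1 + Real.exp (b * y)) :=
    hC.mono fun x hx => ae_of_all _ fun y => by
      rw [Real.norm_of_nonneg (div_nonneg (hr _) (hr _))]; exact hx y
  simpa only [integral_div] using tendsto_integral_filter_of_dominated_convergence _
    (Eventually.of_forall hmeas) hdom (((integrable_const 1).add hexp).const_mul C)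
    (ae_of_all _ (tendsto_comp_sub_div_self_of_tail hr htail hg))

end ExponentialTail

lemma tendsto_sum_range_of_tendsto_sum_range_succ {M : Type*} [AddCommMonoid M]
    [TopologicalSpace M] [ContinuousAdd M] {c : ℕ → M} {s : M}
    (h : Tendsto (fun n => ∑ k ∈ range n, c (k + 1)) atTop (𝓝 s)) :
    Tendsto (fun n => ∑ k ∈ range n, c k) atTop (𝓝 (s + c 0)) := by
  rw [← tendsto_add_atTop_iff_nat 1]
  simpa only [sum_range_succ'] using h.add_const (c 0)

namespace ProbabilityTheory

variable {Ω α β γ : Type*} {mΩ : MeasurableSpace Ω} {μ : Measure Ω}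
  [MeasurableSpace α] [MeasurableSpace β] [MeasurableSpace γ]

lemma iIndepFun.indepFun_zero_succ {f : ℕ → Ω → β} (hf : ∀ n, Measurable (f n))
    (h : iIndepFun f μ) : IndepFun (f 0) (fun ω n => f (n + 1) ω) μ := by
  let m : ℕ → MeasurableSpace Ω := fun n => MeasurableSpace.comap (f n) inferInstance
  have hsplit := indep_biSup_compl (fun n => (hf n).comap_le) h ({0} : Set ℕ)
  have hhead : m 0 ≤ ⨆ n ∈ ({0} : Set ℕ), m n := le_biSup m (Set.mem_singleton 0)
  have htail : Measurable[⨆ n ∈ ({0} : Set ℕ)ᶜ, m n] fun ω n => f (n + 1) ω := by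
    let _ : MeasurableSpace Ω := ⨆ n ∈ ({0} : Set ℕ)ᶜ, m n
    exact measurable_pi_lambda _ fun n => Measurable.of_comap_le
      (le_biSup m (by simp : n + 1 ∈ ({0} : Set ℕ)ᶜ))
  exact indep_of_indep_of_le_right (indep_of_indep_of_le_left hsplit hhead) htail.comap_le

lemma IndepFun.indepFun_snd_prodMk [IsFiniteMeasure μ] {X : Ω → α} {Y : Ω → β} {Z : Ω → γ}
    (hX : Measurable X) (hY : Measurable Y) (hZ : Measurable Z)
    (hXYZ : IndepFun (fun ω => (X ω, Y ω)) Z μ) (hXY : IndepFun X Y μ) :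
    IndepFun Y (fun ω => (X ω, Z ω)) μ := by
  have hXZ : IndepFun X Z μ := hXYZ.comp measurable_fst measurable_id
  rw [indepFun_iff_map_prod_eq_prod_map_map hY.aemeasurable (hX.prodMk hZ).aemeasurable,
    (indepFun_iff_map_prod_eq_prod_map_map hX.aemeasurable hZ.aemeasurable).mp hXZ]
  have hlaw : μ.map (fun ω => ((X ω, Y ω), Z ω)) = ((μ.map X).prod (μ.map Y)).prod (μ.map Z) := by
    rw [(indepFun_iff_map_prod_eq_prod_map_map (hX.prodMk hY).aemeasurable
      hZ.aemeasurable).mp hXYZ, (indepFun_iff_map_prod_eq_prod_map_map hX.aemeasurable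
      hY.aemeasurable).mp hXY]
  have hrearrange : (fun ω => (Y ω, (X ω, Z ω))) =
      (MeasurableEquiv.prodAssoc ∘ Prod.map Prod.swap id) ∘ fun ω => ((X ω, Y ω), Z ω) := rfl
  rw [hrearrange, ← Measure.map_map (MeasurableEquiv.prodAssoc.measurable.comp
    (measurable_swap.prodMap measurable_id)) ((hX.prodMk hY).prodMk hZ), hlaw,
    ← Measure.map_map MeasurableEquiv.prodAssoc.measurable (measurable_swap.prodMap measurable_id),
    ← Measure.map_prod_map _ _ measurable_swap measurable_id, Measure.prod_swap, Measure.map_id,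
    Measure.prodAssoc_prod]

lemma IndepFun.of_ae_tendsto_comp {Z : Ω → γ} {Y : Ω → β} {X : Ω → ℝ} {f : ℕ → β → ℝ}
    (hf : ∀ n, Measurable (f n)) (h : IndepFun Z Y μ)
    (hlim : ∀ᵐ ω ∂μ, Tendsto (fun n => f n (Y ω)) atTop (𝓝 (X ω))) : IndepFun Z X μ := by
  refine (h.comp measurable_id (Measurable.limsup hf)).congr .rfl ?_
  filter_upwards [hlim] with ω hω using hω.limsup_eq

lemma IndepFun.measureReal_lt_add [IsFiniteMeasure μ] {Y Z : Ω → ℝ} (hY : Measurable Y)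
    (hZ : Measurable Z) (h : IndepFun Y Z μ) (x : ℝ) :
    μ.real {ω | x < Y ω + Z ω} = ∫ y, μ.real {ω | x - y < Z ω} ∂(μ.map Y) := by
  have hs : MeasurableSet {p : ℝ × ℝ | x < p.1 + p.2} :=
    measurableSet_lt measurable_const measurable_add
  have hlint : μ {ω | x < Y ω + Z ω} = ∫⁻ y, μ {ω | x - y < Z ω} ∂(μ.map Y) := by
    change μ ((fun ω => (Y ω, Z ω)) ⁻¹' {p | x < p.1 + p.2}) = _
    rw [← Measure.map_apply (hY.prodMk hZ) hs,
      (indepFun_iff_map_prod_eq_prod_map_map hY.aemeasurable hZ.aemeasurable).mp h,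
      Measure.prod_apply hs]
    refine lintegral_congr fun y => ?_
    have hslice : Prod.mk y ⁻¹' {p : ℝ × ℝ | x < p.1 + p.2} = Set.Ioi (x - y) := by
      ext; simp [sub_lt_iff_lt_add']
    rw [hslice, Measure.map_apply hZ measurableSet_Ioi]
    rfl
  have hmono : Monotone fun y => μ {ω | x - y < Z ω} := fun y y' hyy' =>
    measure_mono fun ω (hω : x - y < Z ω) => (show x - y' < Z ω by linarith)
  rw [measureReal_def, hlint, ← integral_toReal hmono.measurable.aemeasurable
    (ae_of_all _ fun _ => measure_lt_top _ _)]
  rfl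

end ProbabilityTheory

theorem stmt_11_general
    {Ω : Type*} [MeasureSpace Ω] [IsProbabilityMeasure (ℙ : Measure Ω)]
    (A B : ℕ → Ω → ℝ) (X Xstar : Ω → ℝ)
    (hA : ∀ n, Measurable (A n)) (hB : ∀ n, Measurable (B n))
    (hXs : Measurable Xstar)
    (hindep : iIndepFun (fun n ω => (A n ω, B n ω)) ℙ)
    (hindepAB : IndepFun (A 0) (B 0) ℙ)
    (hXconv : ∀ᵐ ω ∂ℙ, Tendsto
      (fun n => ∑ k ∈ Finset.range n, (∏ i ∈ Finset.range k, A i ω) * B k ω)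
      atTop (nhds (X ω)))
    (hXsconv : ∀ᵐ ω ∂ℙ, Tendsto
      (fun n => ∑ k ∈ Finset.range n, (∏ i ∈ Finset.range (k + 1), A i ω) * B (k + 1) ω)
      atTop (nhds (Xstar ω)))
    (b : ℝ) (hb : 0 < b) (g : ℝ → ℝ)
    (hBtail : Tendsto (fun x : ℝ =>
      (ℙ {ω | B 0 ω > x}).toReal / (g x * Real.exp (-b * x))) atTop (nhds 1))
    (hgslow : ∀ c : ℝ, 0 < c →
      Tendsto (fun x : ℝ => g (Real.log (c * x)) / g (Real.log x)) atTop (nhds 1))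
    (hgsup : ∃ M : ℝ, ∀ᶠ x : ℝ in atTop, ∀ y ∈ Set.Icc (1 : ℝ) x, g y / g x ≤ M)
    (hXsexp : Integrable (fun ω => Real.exp (b * Xstar ω)) ℙ) :
    Tendsto (fun x : ℝ =>
        (ℙ {ω | X ω > x}).toReal / (ℙ {ω | B 0 ω > x}).toReal)
      atTop (nhds (∫ ω, Real.exp (b * Xstar ω) ∂ℙ)) := by
  let W : Ω → ℕ → ℝ × ℝ := fun ω n => (A (n + 1) ω, B (n + 1) ω)
  have hW : Measurable W := measurable_pi_lambda _ fun n => (hA _).prodMk (hB _)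
  have hB0AW : IndepFun (B 0) (fun ω => (A 0 ω, W ω)) ℙ :=
    (hindep.indepFun_zero_succ fun n => (hA n).prodMk (hB n)).indepFun_snd_prodMk
      (hA 0) (hB 0) hW hindepAB
  -- `X* = A₀ · (perpetuity generated by the shifted sequence)` is a function of `(A₀, W)`
  have hB0Xs : IndepFun (B 0) Xstar ℙ := by
    refine hB0AW.of_ae_tendsto_comp
      (f := fun n p => ∑ k ∈ range n, (p.1 * ∏ j ∈ range k, (p.2 j).1) * (p.2 k).2)
      (fun n => by fun_prop) ?_
    filter_upwards [hXsconv] with ω hω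
    refine hω.congr fun n => sum_congr rfl fun k _ => ?_
    rw [prod_range_succ', mul_comm _ (A 0 ω)]
  have hXae : X =ᵐ[ℙ] fun ω => Xstar ω + B 0 ω := by
    filter_upwards [hXconv, hXsconv] with ω hXω hXsω
    simpa using tendsto_nhds_unique hXω (tendsto_sum_range_of_tendsto_sum_range_succ hXsω)
  have hXtail : ∀ x, (ℙ : Measure Ω).real {ω | x < X ω} =
      ∫ y, (ℙ : Measure Ω).real {ω | x - y < B 0 ω} ∂((ℙ : Measure Ω).map Xstar) := fun x => by
    have hsets : {ω | x < X ω} =ᵐ[ℙ] {ω | x < Xstar ω + B 0 ω} :=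
      hXae.mono fun ω hω => congrArg (x < ·) hω
    rw [measureReal_congr hsets]
    exact hB0Xs.symm.measureReal_lt_add hXs (hB 0) x
  have hexp : AEStronglyMeasurable (fun y : ℝ => Real.exp (b * y))
      ((ℙ : Measure Ω).map Xstar) := by
    fun_prop
  rw [← integral_map hXs.aemeasurable hexp]
  refine (tendsto_integral_comp_sub_div (r := fun t => (ℙ : Measure Ω).real {ω | t < B 0 ω})
    ((ℙ : Measure Ω).map Xstar) hb.le (fun _ => measureReal_nonneg)
    (fun s t hst => measureReal_mono fun ω (hω : t < B 0 ω) => hst.trans_lt hω)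
    (fun _ => measureReal_le_one) hBtail (tendsto_comp_sub_div_self_of_comp_log hgslow) hgsup
    ((integrable_map_measure hexp hXs.aemeasurable).mpr hXsexp)).congr fun x => ?_
  rw [← hXtail]
  rfl

theorem stmt_11
    {Ω : Type*} [MeasureSpace Ω] [IsProbabilityMeasure (ℙ : Measure Ω)]
    (A B : ℕ → Ω → ℝ) (X Xstar : Ω → ℝ)
    (hA : ∀ n, Measurable (A n)) (hB : ∀ n, Measurable (B n))
    (hX : Measurable X) (hXs : Measurable Xstar)
    (hindep : iIndepFun (fun n ω => (A n ω, B n ω)) ℙ)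
    (hident : ∀ n, IdentDistrib (fun ω => (A n ω, B n ω)) (fun ω => (A 0 ω, B 0 ω)) ℙ ℙ)
    (hindepAB : IndepFun (A 0) (B 0) ℙ)
    (hB0 : ℙ {ω | B 0 ω = 0} < 1)
    (hXconv : ∀ᵐ ω ∂ℙ, Tendsto
      (fun n => ∑ k ∈ Finset.range n, (∏ i ∈ Finset.range k, A i ω) * B k ω)
      atTop (nhds (X ω)))
    (hXsconv : ∀ᵐ ω ∂ℙ, Tendsto
      (fun n => ∑ k ∈ Finset.range n, (∏ i ∈ Finset.range (k + 1), A i ω) * B (k + 1) ω)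
      atTop (nhds (Xstar ω)))
    (hA1lt : ℙ {ω | A 0 ω = 1} < 1)
    (habc : ℙ {ω | A 0 ω ∈ Set.Ioc (0 : ℝ) 1} = 1 ∨
      ℙ {ω | A 0 ω ∈ Set.Ioo (-1 : ℝ) 0} = 1 ∨
      (ℙ {ω | |A 0 ω| ∈ Set.Ioc (0 : ℝ) 1} = 1 ∧
        ℙ {ω | A 0 ω = -1} ∈ Set.Ioo (0 : ENNReal) 1))
    (b : ℝ) (hb : 0 < b) (g : ℝ → ℝ)
    (hBtail : Tendsto (fun x : ℝ =>
      (ℙ {ω | B 0 ω > x}).toReal / (g x * Real.exp (-b * x))) atTop (nhds 1))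
    (hgslow : ∀ c : ℝ, 0 < c →
      Tendsto (fun x : ℝ => g (Real.log (c * x)) / g (Real.log x)) atTop (nhds 1))
    (hgsup : ∃ M : ℝ, ∀ᶠ x : ℝ in atTop, ∀ y ∈ Set.Icc (1 : ℝ) x, g y / g x ≤ M)
    (hXsexp : Integrable (fun ω => Real.exp (b * Xstar ω)) ℙ) :
    Tendsto (fun x : ℝ =>
        (ℙ {ω | X ω > x}).toReal / (ℙ {ω | B 0 ω > x}).toReal)
      atTop (nhds (∫ ω, Real.exp (b * Xstar ω) ∂ℙ)) :=
  stmt_11_general A B X Xstar hA hB hXs hindep hindepAB hXconv hXsconv b hb g hBtail hgslow hgsup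
    hXsexp
end

section
/- Suppose P{A∈(0,1]}=1; P{B>x} ~ a·x^c·e^{−bx} as x→∞ for some a,b>0 and c<−1; E[e^{bB}·1_{{A=1}}]<1; and for each y∈ℝ, P{Ay+B>x} ~ f(y)·P{B>x} as x→∞, where f is a nonnegative measurable function. Let Y be a random variable independent of (A,B) which satisfies P{Y>x} ~ c_Y·P{B>x} as x→∞ for some constant c_Y>0. Then E[f(Y)]<∞ and P{AY+B>x} ~ (c_Y·E[e^{bB}·1_{{A=1}}] + E[f(Y)])·P{B>x} as x→∞. -/
/-!
Pass to the laws `ν` of `(A, B)` and `μ` of `Y`, so that `P(AY + B > x) = (ν ⊗ μ){αy + β > x}`,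
and split according to whether `y ≤ x / 2`. Write `g x = P(B > x)`.

The tail `g x ~ a x^c e^{-bx}` satisfies `g (x - t) / g x → e^{bt}` and the Potter-type bound
`g (x - t) ≤ K e^{bt} g x` for `0 ≤ t ≤ x / 2`; the same holds for the tail of `Y` relative to `g`.
Since `c < -1`, these tails are summable against `e^{bn}`, so `E e^{bB⁺}` and `E e^{bY⁺}` are finite.

On `{y ≤ x / 2}` condition on `Y = y`: the ratio tends to `f y` and is dominated by `K e^{by⁺}`,
so dominated convergence gives `E f(Y)`. On `{y > x / 2}` condition on `(A, B) = (α, β)`: for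
`α = 1` the ratio tends to `c_Y e^{bβ}`; for `α < 1` the event forces `y > (x - β) / α`, which
exceeds `x` by a linearly growing amount, so the ratio tends to `0`. Domination by `K e^{bβ⁺}`
gives the limit `c_Y E[e^{bB}; A = 1]`.
-/

open MeasureTheory Filter Set Real Topology

noncomputable def expPowTail (a b c x : ℝ) : ℝ := a * x ^ c * exp (-b * x)

section ExpPowTail

variable {a b c : ℝ}

lemma expPowTail_pos (ha : 0 < a) {x : ℝ} (hx : 0 < x) : 0 < expPowTail a b c x := by
  unfold expPowTail
  positivity

lemma tendsto_expPowTail_sub_div (ha : a ≠ 0) (t : ℝ) :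
    Tendsto (fun x => expPowTail a b c (x - t) / expPowTail a b c x) atTop (𝓝 (exp (b * t))) := by
  have hbase : Tendsto (fun x : ℝ => 1 - t / x) atTop (𝓝 1) := by
    simpa using tendsto_const_nhds.sub ((tendsto_const_nhds (x := t)).div_atTop tendsto_id)
  have hpow : Tendsto (fun x : ℝ => (1 - t / x) ^ c) atTop (𝓝 1) := by
    simpa using hbase.rpow_const (Or.inl one_ne_zero)
  have hlim := hpow.mul_const (exp (b * t))
  rw [one_mul] at hlim
  refine hlim.congr' ?_
  filter_upwards [eventually_gt_atTop (max t 0)] with x hx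
  have hx0 : 0 < x := (le_max_right t 0).trans_lt hx
  have hxt : 0 < 1 - t / x := by
    rw [sub_pos, div_lt_one hx0]; exact (le_max_left t 0).trans_lt hx
  have hsub : x - t = (1 - t / x) * x := by field_simp
  unfold expPowTail
  rw [hsub, Real.mul_rpow hxt.le hx0.le, show -b * ((1 - t / x) * x) = b * t + -b * x by
    field_simp; ring, exp_add]
  field_simp [(Real.rpow_pos_of_pos hx0 c).ne', (exp_pos (-b * x)).ne']

lemma expPowTail_le_of_le (ha : 0 ≤ a) (hc : c ≤ 0) {x z : ℝ} (hx : 0 < x) (hxz : x ≤ z) :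
    expPowTail a b c z ≤ exp (-b * (z - x)) * expPowTail a b c x := by
  have hpow : z ^ c ≤ x ^ c := Real.rpow_le_rpow_of_nonpos hx hxz hc
  calc a * z ^ c * exp (-b * z) ≤ a * x ^ c * exp (-b * z) := by gcongr
    _ = exp (-b * (z - x)) * (a * x ^ c * exp (-b * x)) := by
      rw [show -b * z = -b * (z - x) + -b * x by ring, exp_add]; ring

lemma expPowTail_sub_le (ha : 0 ≤ a) (hb : 0 ≤ b) (hc : c ≤ 0) {x t : ℝ} (hx : 0 < x)
    (ht : t ≤ x / 2) :
    expPowTail a b c (x - t) ≤ 2 ^ (-c) * exp (b * max t 0) * expPowTail a b c x := by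
  have hφ : 0 ≤ expPowTail a b c x := by unfold expPowTail; positivity
  have h2c : 1 ≤ (2 : ℝ) ^ (-c) := Real.one_le_rpow one_le_two (by linarith)
  rcases le_total t 0 with ht0 | ht0
  · calc expPowTail a b c (x - t) ≤ exp (-b * (x - t - x)) * expPowTail a b c x :=
          expPowTail_le_of_le ha hc hx (by linarith)
      _ ≤ 1 * expPowTail a b c x := by
          gcongr; exact exp_le_one_iff.2 (by nlinarith)
      _ ≤ 2 ^ (-c) * exp (b * max t 0) * expPowTail a b c x := by
          rw [max_eq_right ht0, mul_zero, exp_zero, mul_one]; gcongr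
  · have hpow : (x - t) ^ c ≤ 2 ^ (-c) * x ^ c := by
      calc (x - t) ^ c ≤ (x / 2) ^ c := Real.rpow_le_rpow_of_nonpos (by linarith) (by linarith) hc
        _ = 2 ^ (-c) * x ^ c := by
          rw [Real.div_rpow hx.le zero_le_two, Real.rpow_neg zero_le_two, div_eq_inv_mul]
    unfold expPowTail
    rw [max_eq_left ht0, show -b * (x - t) = b * t + -b * x by ring, exp_add]
    calc a * (x - t) ^ c * (exp (b * t) * exp (-b * x))
        ≤ a * (2 ^ (-c) * x ^ c) * (exp (b * t) * exp (-b * x)) := by gcongr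
      _ = 2 ^ (-c) * exp (b * t) * (a * x ^ c * exp (-b * x)) := by ring

end ExpPowTail

lemma Filter.Eventually.forall_sub_of_le_half {P : ℝ → Prop} (hP : ∀ᶠ x in atTop, P x) :
    ∀ᶠ x in atTop, ∀ t ≤ x / 2, P (x - t) := by
  obtain ⟨x₀, hx₀⟩ := eventually_atTop.1 hP
  filter_upwards [eventually_ge_atTop (2 * x₀)] with x hx t ht
  exact hx₀ _ (by linarith)

lemma tendsto_sub_const_atTop (t : ℝ) : Tendsto (fun x : ℝ => x - t) atTop atTop :=
  tendsto_atTop_add_const_right atTop (-t) tendsto_id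

section ExpPowTailEquivalent

variable {a b c k : ℝ} {g h : ℝ → ℝ}

lemma eventually_expPowTail_div_two_le (ha : 0 < a)
    (hg : Tendsto (fun x => g x / expPowTail a b c x) atTop (𝓝 1)) :
    ∀ᶠ x in atTop, expPowTail a b c x / 2 ≤ g x ∧ g x ≤ 2 * expPowTail a b c x := by
  filter_upwards [hg (Ioo_mem_nhds one_half_lt_one one_lt_two), eventually_gt_atTop 0]
    with x hx hx0
  have hφ := expPowTail_pos (b := b) (c := c) ha hx0
  rw [Set.mem_preimage, Set.mem_Ioo, lt_div_iff₀ hφ, div_lt_iff₀ hφ] at hx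
  constructor <;> linarith

lemma eventually_pos_of_tendsto_div_expPowTail (ha : 0 < a)
    (hg : Tendsto (fun x => g x / expPowTail a b c x) atTop (𝓝 1)) : ∀ᶠ x in atTop, 0 < g x := by
  filter_upwards [eventually_expPowTail_div_two_le ha hg, eventually_gt_atTop 0] with x hx hx0
  linarith [expPowTail_pos (b := b) (c := c) ha hx0]

lemma eventually_le_mul_of_tendsto_div (hh : Tendsto (fun x => h x / g x) atTop (𝓝 k))
    (hg : ∀ᶠ x in atTop, 0 < g x) : ∀ᶠ x in atTop, h x ≤ (|k| + 1) * g x := by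
  filter_upwards [hh (Iio_mem_nhds ((le_abs_self k).trans_lt (lt_add_one _))), hg] with x hx hgx
  rw [Set.mem_preimage, Set.mem_Iio, div_lt_iff₀ hgx] at hx
  exact hx.le

lemma tendsto_sub_div_self (ha : 0 < a)
    (hg : Tendsto (fun x => g x / expPowTail a b c x) atTop (𝓝 1)) (t : ℝ) :
    Tendsto (fun x => g (x - t) / g x) atTop (𝓝 (exp (b * t))) := by
  have hlim := ((hg.comp (tendsto_sub_const_atTop t)).mul
    (tendsto_expPowTail_sub_div (b := b) (c := c) ha.ne' t)).div hg one_ne_zero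
  rw [one_mul, div_one] at hlim
  refine hlim.congr' ?_
  filter_upwards [eventually_gt_atTop (max t 0)] with x hx
  have hx0 : 0 < x := (le_max_right t 0).trans_lt hx
  have hxt : 0 < x - t := sub_pos.2 ((le_max_left t 0).trans_lt hx)
  simp only [Function.comp_apply, Pi.div_apply]
  rw [div_mul_div_cancel₀ (expPowTail_pos ha hxt).ne',
    div_div_div_cancel_right₀ (expPowTail_pos ha hx0).ne']

lemma tendsto_sub_div (ha : 0 < a)
    (hg : Tendsto (fun x => g x / expPowTail a b c x) atTop (𝓝 1))
    (hh : Tendsto (fun x => h x / g x) atTop (𝓝 k)) (t : ℝ) :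
    Tendsto (fun x => h (x - t) / g x) atTop (𝓝 (k * exp (b * t))) := by
  refine ((hh.comp (tendsto_sub_const_atTop t)).mul (tendsto_sub_div_self ha hg t)).congr' ?_
  filter_upwards [(tendsto_sub_const_atTop t).eventually
    (eventually_pos_of_tendsto_div_expPowTail ha hg)] with x hx
  exact div_mul_div_cancel₀ hx.ne'

lemma exists_sub_le_mul (ha : 0 < a) (hb : 0 ≤ b) (hc : c ≤ 0)
    (hg : Tendsto (fun x => g x / expPowTail a b c x) atTop (𝓝 1)) {L : ℝ} (hL : 0 ≤ L)
    (hh : ∀ᶠ x in atTop, h x ≤ L * g x) :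
    ∃ K, 0 ≤ K ∧ ∀ᶠ x in atTop, ∀ t ≤ x / 2, h (x - t) ≤ K * exp (b * max t 0) * g x := by
  have hbounds := eventually_expPowTail_div_two_le ha hg
  refine ⟨4 * L * 2 ^ (-c), by positivity, ?_⟩
  filter_upwards [(hh.and hbounds).forall_sub_of_le_half, hbounds, eventually_gt_atTop 0]
    with x hsub hx hx0 t ht
  obtain ⟨hhg, -, hgφ⟩ := hsub t ht
  calc h (x - t) ≤ L * (2 * expPowTail a b c (x - t)) := by
        refine hhg.trans ?_; gcongr
    _ ≤ L * (2 * (2 ^ (-c) * exp (b * max t 0) * expPowTail a b c x)) := by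
        gcongr; exact expPowTail_sub_le ha.le hb hc hx0 ht
    _ ≤ L * (2 * (2 ^ (-c) * exp (b * max t 0) * (2 * g x))) := by
        gcongr; linarith [hx.1]
    _ = 4 * L * 2 ^ (-c) * exp (b * max t 0) * g x := by ring

lemma tendsto_comp_div_eq_zero (ha : 0 < a) (hb : 0 < b) (hc : c ≤ 0)
    (hg : Tendsto (fun x => g x / expPowTail a b c x) atTop (𝓝 1)) {L : ℝ} (hL : 0 ≤ L)
    (hh : ∀ᶠ x in atTop, h x ≤ L * g x) (h0 : ∀ x, 0 ≤ h x) {z : ℝ → ℝ}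
    (hz : Tendsto (fun x => z x - x) atTop atTop) :
    Tendsto (fun x => h (z x) / g x) atTop (𝓝 0) := by
  have hzx : Tendsto z atTop atTop :=
    (hz.atTop_add_atTop tendsto_id).congr fun x => sub_add_cancel (z x) x
  have hbounds := eventually_expPowTail_div_two_le ha hg
  have hdecay : Tendsto (fun x => 4 * L * exp (-(b * (z x - x)))) atTop (𝓝 0) := by
    simpa using (tendsto_exp_neg_atTop_nhds_zero.comp (hz.const_mul_atTop hb)).const_mul (4 * L)
  refine squeeze_zero' ?_ ?_ hdecay
  · filter_upwards [eventually_pos_of_tendsto_div_expPowTail ha hg] with x hx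
    exact div_nonneg (h0 _) hx.le
  filter_upwards [hzx.eventually (hh.and hbounds), hbounds, hz.eventually (eventually_ge_atTop 0),
    eventually_gt_atTop 0] with x hzL hx hzx0 hx0
  obtain ⟨hhg, -, hgφ⟩ := hzL
  have hgx : 0 < g x := by linarith [expPowTail_pos (b := b) (c := c) ha hx0, hx.1]
  rw [div_le_iff₀ hgx]
  calc h (z x) ≤ L * (2 * (exp (-b * (z x - x)) * expPowTail a b c x)) := by
        refine hhg.trans ?_
        gcongr
        exact hgφ.trans (by gcongr; exact expPowTail_le_of_le ha.le hc hx0 (by linarith))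
    _ ≤ L * (2 * (exp (-b * (z x - x)) * (2 * g x))) := by gcongr; linarith [hx.1]
    _ = 4 * L * exp (-(b * (z x - x))) * g x := by rw [neg_mul]; ring

end ExpPowTailEquivalent

lemma ofReal_exp_mul_max_le_tsum {b : ℝ} (hb : 0 ≤ b) (y : ℝ) :
    ENNReal.ofReal (exp (b * max y 0)) ≤
      1 + ∑' n : ℕ, (Ioi (n : ℝ)).indicator (fun _ => ENNReal.ofReal (exp (b * (n + 1)))) y := by
  rcases le_or_gt y 0 with hy | hy
  · simp [max_eq_right hy]
  set n := ⌈y⌉₊ - 1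
  have hn : (n : ℝ) + 1 = ⌈y⌉₊ := by
    rw [Nat.cast_sub (Nat.one_le_ceil_iff.2 hy), Nat.cast_one, sub_add_cancel]
  have hny : (n : ℝ) < y := by linarith [Nat.ceil_lt_add_one hy.le]
  calc ENNReal.ofReal (exp (b * max y 0)) ≤ ENNReal.ofReal (exp (b * (n + 1))) := by
        rw [max_eq_left hy.le, hn]
        gcongr
        exact Nat.le_ceil y
    _ = (Ioi (n : ℝ)).indicator (fun _ => ENNReal.ofReal (exp (b * (n + 1)))) y := by
        rw [indicator_of_mem (show y ∈ Ioi (n : ℝ) from hny)]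
    _ ≤ _ := (ENNReal.le_tsum n).trans le_add_self

lemma integrable_exp_mul_max_of_measureReal_lt_le {Ω : Type*} [MeasurableSpace Ω] {μ : Measure Ω}
    [IsFiniteMeasure μ] {X : Ω → ℝ} (hX : Measurable X) {b c C : ℝ} (hb : 0 ≤ b) (hc : c < -1)
    (htail : ∀ᶠ s in atTop, μ.real {ω | s < X ω} ≤ C * s ^ c * exp (-b * s)) :
    Integrable (fun ω => exp (b * max (X ω) 0)) μ := by
  set u : ℕ → ℝ := fun n => exp (b * (n + 1)) * μ.real {ω | n < X ω}
  have hu : Summable u := by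
    refine Summable.of_norm_bounded_eventually_nat
      ((Real.summable_nat_rpow.2 hc).mul_left (C * exp b)) ?_
    filter_upwards [tendsto_natCast_atTop_atTop.eventually htail] with n hn
    rw [Real.norm_of_nonneg (by positivity)]
    calc u n ≤ exp (b * (n + 1)) * (C * n ^ c * exp (-b * n)) :=
          mul_le_mul_of_nonneg_left hn (exp_pos _).le
      _ = C * exp b * n ^ c := by
        rw [show b * (n + 1) = b + b * n by ring, exp_add, neg_mul, exp_neg]
        field_simp
  have hmeas : Measurable fun ω => exp (b * max (X ω) 0) := by fun_prop
  refine (lintegral_ofReal_ne_top_iff_integrable hmeas.aestronglyMeasurable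
    (ae_of_all _ fun ω => (exp_pos _).le)).1 (lt_top_iff_ne_top.1 ?_)
  calc ∫⁻ ω, ENNReal.ofReal (exp (b * max (X ω) 0)) ∂μ
      ≤ ∫⁻ ω, 1 + ∑' n : ℕ, (X ⁻¹' Ioi (n : ℝ)).indicator
          (fun _ => ENNReal.ofReal (exp (b * (n + 1)))) ω ∂μ :=
        lintegral_mono fun ω => ofReal_exp_mul_max_le_tsum hb (X ω)
    _ = μ univ + ∑' n : ℕ, ENNReal.ofReal (u n) := by
        rw [lintegral_add_left measurable_const, lintegral_const, one_mul,
          lintegral_tsum fun n => (aemeasurable_const.indicator (hX measurableSet_Ioi))]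
        congr 1
        refine tsum_congr fun n => ?_
        rw [lintegral_indicator_const (hX measurableSet_Ioi), ENNReal.ofReal_mul (exp_pos _).le,
          ofReal_measureReal]
        rfl
    _ = μ univ + ENNReal.ofReal (∑' n, u n) := by
        rw [ENNReal.ofReal_tsum_of_nonneg (fun n => by positivity) hu]
    _ < ⊤ := ENNReal.add_lt_top.2 ⟨measure_lt_top μ univ, ENNReal.ofReal_lt_top⟩

lemma integrable_exp_mul_max_of_measureReal_lt_le_mul {a b c L : ℝ} {g : ℝ → ℝ} (ha : 0 < a)
    (hb : 0 ≤ b) (hc : c < -1) (hg : Tendsto (fun x => g x / expPowTail a b c x) atTop (𝓝 1))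
    {Ω : Type*} [MeasurableSpace Ω] {μ : Measure Ω} [IsFiniteMeasure μ] {X : Ω → ℝ}
    (hX : Measurable X) (hL : 0 ≤ L) (htail : ∀ᶠ x in atTop, μ.real {ω | x < X ω} ≤ L * g x) :
    Integrable (fun ω => exp (b * max (X ω) 0)) μ := by
  refine integrable_exp_mul_max_of_measureReal_lt_le hX hb hc (C := 2 * L * a) ?_
  filter_upwards [htail, eventually_expPowTail_div_two_le ha hg] with s hs hφ
  calc μ.real {ω | s < X ω} ≤ L * (2 * expPowTail a b c s) := hs.trans (by gcongr; exact hφ.2)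
    _ = 2 * L * a * s ^ c * exp (-b * s) := by unfold expPowTail; ring

lemma MeasureTheory.measureReal_mono_ae {α : Type*} [MeasurableSpace α] {μ : Measure α}
    {s t : Set α} (h : s ≤ᵐ[μ] t) (ht : μ t ≠ ⊤ := by finiteness) : μ.real s ≤ μ.real t :=
  ENNReal.toReal_mono ht (measure_mono_ae h)

section ProdReal

variable {α β : Type*} [MeasurableSpace α] [MeasurableSpace β] {μ : Measure α} {ν : Measure β}

lemma MeasureTheory.Measure.measureReal_prod_apply [IsFiniteMeasure ν] {s : Set (α × β)}
    (hs : MeasurableSet s) :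
    (μ.prod ν).real s = ∫ x, ν.real (Prod.mk x ⁻¹' s) ∂μ := by
  rw [measureReal_def, Measure.prod_apply hs, ← integral_toReal
    (measurable_measure_prodMk_left hs).aemeasurable (ae_of_all _ fun _ => measure_lt_top ν _)]
  rfl

theorem tendsto_measureReal_prod_div_of_dominated [IsFiniteMeasure ν] {s : ℝ → Set (α × β)}
    (hs : ∀ x, MeasurableSet (s x)) {g : ℝ → ℝ} (hg : ∀ᶠ x in atTop, 0 < g x) {F bound : α → ℝ}
    (hbound : Integrable bound μ)
    (hle : ∀ᶠ x in atTop, ∀ᵐ a ∂μ, ν.real (Prod.mk a ⁻¹' s x) ≤ bound a * g x)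
    (hlim : ∀ᵐ a ∂μ, Tendsto (fun x => ν.real (Prod.mk a ⁻¹' s x) / g x) atTop (𝓝 (F a))) :
    Integrable F μ ∧ Tendsto (fun x => (μ.prod ν).real (s x) / g x) atTop (𝓝 (∫ a, F a ∂μ)) := by
  have hmeas : ∀ x, AEStronglyMeasurable (fun a => ν.real (Prod.mk a ⁻¹' s x) / g x) μ := fun x =>
    ((measurable_measure_prodMk_left (hs x)).ennreal_toReal.div_const _).aestronglyMeasurable
  have hnorm : ∀ᶠ x in atTop, ∀ᵐ a ∂μ, ‖ν.real (Prod.mk a ⁻¹' s x) / g x‖ ≤ bound a := by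
    filter_upwards [hle, hg] with x hx hgx
    filter_upwards [hx] with a ha
    rwa [Real.norm_of_nonneg (div_nonneg measureReal_nonneg hgx.le), div_le_iff₀ hgx]
  obtain ⟨x₀, hx₀⟩ := eventually_atTop.1 hnorm
  have hseq : Tendsto (fun n : ℕ => x₀ + n) atTop atTop :=
    tendsto_atTop_add_const_left _ _ tendsto_natCast_atTop_atTop
  refine ⟨⟨aestronglyMeasurable_of_tendsto_ae atTop hmeas hlim,
    hasFiniteIntegral_of_dominated_convergence hbound.2 (fun n => hx₀ _ (by simp))
      (hlim.mono fun a ha => ha.comp hseq)⟩, ?_⟩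
  refine (tendsto_integral_filter_of_dominated_convergence _ (Eventually.of_forall hmeas) hnorm
    hbound hlim).congr fun x => ?_
  rw [Measure.measureReal_prod_apply (hs x), integral_div]

end ProdReal

lemma measurableSet_lt_fst_fst_mul_snd_add (x : ℝ) :
    MeasurableSet {q : (ℝ × ℝ) × ℝ | x < q.1.1 * q.2 + q.1.2} :=
  measurableSet_lt measurable_const (by fun_prop)

lemma mul_le_max_zero_of_mem_Icc {α y : ℝ} (hα : α ∈ Icc (0 : ℝ) 1) : α * y ≤ max y 0 :=
  (mul_le_mul_of_nonneg_left (le_max_left y 0) hα.1).trans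
    (mul_le_of_le_one_left (le_max_right y 0) hα.2)

lemma measureReal_lt_fst_mul_add_snd_le {ν : Measure (ℝ × ℝ)} [IsFiniteMeasure ν]
    (hν : ∀ᵐ p ∂ν, p.1 ∈ Icc (0 : ℝ) 1) (x y : ℝ) :
    ν.real {p | x < p.1 * y + p.2} ≤ ν.real {p | x - max y 0 < p.2} :=
  measureReal_mono_ae <| by
    filter_upwards [hν] with p hp (hlt : x < p.1 * y + p.2)
    show x - max y 0 < p.2
    linarith [mul_le_max_zero_of_mem_Icc (y := y) hp]

section AffineTail

variable {ν : Measure (ℝ × ℝ)} {μ : Measure ℝ} [IsFiniteMeasure ν] [IsFiniteMeasure μ]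
  {a b c k : ℝ}

theorem tendsto_measureReal_prod_le_half_div (ha : 0 < a) (hb : 0 < b) (hc : c < -1)
    (hν : ∀ᵐ p ∂ν, p.1 ∈ Icc (0 : ℝ) 1)
    (hg : Tendsto (fun x => ν.real {p | x < p.2} / expPowTail a b c x) atTop (𝓝 1))
    (hμ : Tendsto (fun x => μ.real (Ioi x) / ν.real {p | x < p.2}) atTop (𝓝 k)) {f : ℝ → ℝ}
    (hf : ∀ y, Tendsto (fun x => ν.real {p | x < p.1 * y + p.2} / ν.real {p | x < p.2}) atTop
      (𝓝 (f y))) :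
    Integrable f μ ∧
      Tendsto (fun x => (ν.prod μ).real {q | x < q.1.1 * q.2 + q.1.2 ∧ q.2 ≤ x / 2} /
        ν.real {p | x < p.2}) atTop (𝓝 (∫ y, f y ∂μ)) := by
  set g : ℝ → ℝ := fun x => ν.real {p | x < p.2}
  have hT : ∀ x, MeasurableSet {q : (ℝ × ℝ) × ℝ | x < q.1.1 * q.2 + q.1.2 ∧ q.2 ≤ x / 2} :=
    fun x => (measurableSet_lt_fst_fst_mul_snd_add x).inter
      (measurableSet_le measurable_snd measurable_const)
  set s : ℝ → Set (ℝ × (ℝ × ℝ)) := fun x => {q | x < q.2.1 * q.1 + q.2.2 ∧ q.1 ≤ x / 2}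
  have hswap : ∀ x, (ν.prod μ).real {q | x < q.1.1 * q.2 + q.1.2 ∧ q.2 ≤ x / 2} =
      (μ.prod ν).real (s x) := fun x => by
    rw [← Measure.prod_swap, map_measureReal_apply measurable_swap (hT x)]
    rfl
  simp only [hswap]
  have hgpos := eventually_pos_of_tendsto_div_expPowTail ha hg
  obtain ⟨K, hK0, hK⟩ := exists_sub_le_mul ha hb.le (by linarith) hg zero_le_one
    (Eventually.of_forall fun x => (one_mul (g x)).ge)
  refine tendsto_measureReal_prod_div_of_dominated (s := s) (fun x => measurable_swap (hT x)) hgpos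
    ((integrable_exp_mul_max_of_measureReal_lt_le_mul ha hb.le hc hg measurable_id (by positivity)
      (eventually_le_mul_of_tendsto_div hμ hgpos)).const_mul K) ?_ (ae_of_all _ fun y => ?_)
  · filter_upwards [hK, eventually_ge_atTop 0] with x hKx hx
    refine ae_of_all _ fun y => ?_
    by_cases hy : y ≤ x / 2
    · calc ν.real {p | x < p.1 * y + p.2 ∧ y ≤ x / 2} ≤ g (x - max y 0) := by
            simpa only [hy, and_true] using measureReal_lt_fst_mul_add_snd_le hν x y
        _ ≤ K * exp (b * max (max y 0) 0) * g x := hKx _ (max_le hy (by linarith))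
        _ = K * exp (b * max y 0) * g x := by rw [max_eq_left (le_max_right y 0)]
    · have hempty : Prod.mk y ⁻¹' s x = ∅ := eq_empty_of_forall_notMem fun p hp => hy hp.2
      rw [hempty, measureReal_empty]
      positivity
  · refine (hf y).congr' ?_
    filter_upwards [eventually_ge_atTop (2 * y)] with x hx
    have hslice : Prod.mk y ⁻¹' s x = {p | x < p.1 * y + p.2} := by
      ext p
      exact and_iff_left (by linarith)
    rw [hslice]

lemma tendsto_measureReal_lt_mul_add_and_half_lt_div {g : ℝ → ℝ} (ha : 0 < a) (hb : 0 < b)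
    (hc : c ≤ 0) (hg : Tendsto (fun x => g x / expPowTail a b c x) atTop (𝓝 1))
    (hμ : Tendsto (fun x => μ.real (Ioi x) / g x) atTop (𝓝 k)) {α β : ℝ}
    (hα : α ∈ Ioc (0 : ℝ) 1) :
    Tendsto (fun x => μ.real {y | x < α * y + β ∧ x / 2 < y} / g x) atTop
      (𝓝 (if α = 1 then k * exp (b * β) else 0)) := by
  split_ifs with h1
  · refine (tendsto_sub_div ha hg hμ β).congr' ?_
    filter_upwards [eventually_ge_atTop (2 * β)] with x hx
    have hslice : {y | x < α * y + β ∧ x / 2 < y} = Ioi (x - β) := by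
      ext y
      simp only [mem_ofPred_eq, h1, one_mul, mem_Ioi]
      constructor
      · rintro ⟨hy, -⟩; linarith
      · intro hy; constructor <;> linarith
    rw [hslice]
  have hz : Tendsto (fun x => (x - β) / α - x) atTop atTop := by
    refine ((tendsto_id.const_mul_atTop (sub_pos.2 (one_lt_one_div hα.1
      (hα.2.lt_of_ne h1)))).atTop_add (tendsto_const_nhds (x := -(β / α)))).congr fun x => ?_
    simp only [id]
    field_simp
    ring
  have hpos := eventually_pos_of_tendsto_div_expPowTail ha hg
  refine squeeze_zero' ?_ ?_ (tendsto_comp_div_eq_zero ha hb hc hg (by positivity)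
    (eventually_le_mul_of_tendsto_div hμ hpos) (fun _ => measureReal_nonneg) hz)
  · filter_upwards [hpos] with x hx
    exact div_nonneg measureReal_nonneg hx.le
  filter_upwards [hpos] with x hx
  refine div_le_div_of_nonneg_right (measureReal_mono fun y hy => ?_) hx.le
  obtain ⟨hlt, -⟩ : x < α * y + β ∧ x / 2 < y := hy
  rw [mem_Ioi, div_lt_iff₀' hα.1]
  linarith

theorem tendsto_measureReal_prod_half_lt_div (ha : 0 < a) (hb : 0 < b) (hc : c < -1)
    (hν : ∀ᵐ p ∂ν, p.1 ∈ Ioc (0 : ℝ) 1)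
    (hg : Tendsto (fun x => ν.real {p | x < p.2} / expPowTail a b c x) atTop (𝓝 1))
    (hμ : Tendsto (fun x => μ.real (Ioi x) / ν.real {p | x < p.2}) atTop (𝓝 k)) :
    Tendsto (fun x => (ν.prod μ).real {q | x < q.1.1 * q.2 + q.1.2 ∧ x / 2 < q.2} /
      ν.real {p | x < p.2}) atTop (𝓝 (k * ∫ p in {p | p.1 = 1}, exp (b * p.2) ∂ν)) := by
  set g : ℝ → ℝ := fun x => ν.real {p | x < p.2}
  have hgpos := eventually_pos_of_tendsto_div_expPowTail ha hg
  have hL : 0 ≤ |k| + 1 := by positivity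
  obtain ⟨K, hK0, hK⟩ := exists_sub_le_mul ha hb.le (by linarith) hg hL
    (eventually_le_mul_of_tendsto_div hμ hgpos)
  have hT : ∀ x, MeasurableSet {q : (ℝ × ℝ) × ℝ | x < q.1.1 * q.2 + q.1.2 ∧ x / 2 < q.2} :=
    fun x => (measurableSet_lt_fst_fst_mul_snd_add x).inter
      (measurableSet_lt measurable_const measurable_snd)
  have hbound : Integrable (fun p : ℝ × ℝ => K * exp (b * max p.2 0)) ν :=
    (integrable_exp_mul_max_of_measureReal_lt_le_mul ha hb.le hc hg measurable_snd zero_le_one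
      (Eventually.of_forall fun x => (one_mul (g x)).ge)).const_mul K
  rw [← integral_const_mul, ← integral_indicator (measurableSet_eq_fun measurable_fst
    measurable_const)]
  refine (tendsto_measureReal_prod_div_of_dominated hT hgpos hbound ?_ ?_).2
  · filter_upwards [hK, eventually_ge_atTop 0] with x hKx hx
    filter_upwards [hν] with p hp
    have hsub : {y | x < p.1 * y + p.2 ∧ x / 2 < y} ⊆ Ioi (x - min p.2 (x / 2)) := by
      rintro y ⟨hlt, hy⟩
      have : p.1 * y ≤ y := mul_le_of_le_one_left (by linarith) hp.2
      rcases min_cases p.2 (x / 2) with ⟨hm, -⟩ | ⟨hm, -⟩ <;>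
        simp only [mem_Ioi, hm] <;> linarith
    calc μ.real {y | x < p.1 * y + p.2 ∧ x / 2 < y} ≤ μ.real (Ioi (x - min p.2 (x / 2))) :=
          measureReal_mono hsub
      _ ≤ K * exp (b * max (min p.2 (x / 2)) 0) * g x := hKx _ (min_le_right _ _)
      _ ≤ K * exp (b * max p.2 0) * g x := by gcongr; exact min_le_left _ _
  · filter_upwards [hν] with p hp
    simpa only [indicator_apply, mem_ofPred_eq, preimage_ofPred_eq] using
      tendsto_measureReal_lt_mul_add_and_half_lt_div (β := p.2) ha hb (by linarith) hg hμ hp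

theorem tendsto_measureReal_prod_lt_mul_add_div (ha : 0 < a) (hb : 0 < b) (hc : c < -1)
    (hν : ∀ᵐ p ∂ν, p.1 ∈ Ioc (0 : ℝ) 1)
    (hg : Tendsto (fun x => ν.real {p | x < p.2} / expPowTail a b c x) atTop (𝓝 1))
    (hμ : Tendsto (fun x => μ.real (Ioi x) / ν.real {p | x < p.2}) atTop (𝓝 k)) {f : ℝ → ℝ}
    (hf : ∀ y, Tendsto (fun x => ν.real {p | x < p.1 * y + p.2} / ν.real {p | x < p.2}) atTop
      (𝓝 (f y))) :
    Integrable f μ ∧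
      Tendsto (fun x => (ν.prod μ).real {q | x < q.1.1 * q.2 + q.1.2} / ν.real {p | x < p.2})
        atTop (𝓝 (k * ∫ p in {p | p.1 = 1}, exp (b * p.2) ∂ν + ∫ y, f y ∂μ)) := by
  obtain ⟨hf_int, hsmall⟩ := tendsto_measureReal_prod_le_half_div ha hb hc
    (hν.mono fun p hp => Ioc_subset_Icc_self hp) hg hμ hf
  refine ⟨hf_int, ((tendsto_measureReal_prod_half_lt_div ha hb hc hν hg hμ).add hsmall).congr
    fun x => ?_⟩
  have hsplit := measureReal_inter_add_sdiff (μ := ν.prod μ)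
    (s := {q | x < q.1.1 * q.2 + q.1.2}) (measurableSet_le measurable_snd measurable_const :
      MeasurableSet {q : (ℝ × ℝ) × ℝ | q.2 ≤ x / 2})
  rw [← add_div, ← hsplit, add_comm]
  congr 3
  ext q
  simp [not_le]

end AffineTail

open MeasureTheory ProbabilityTheory Filter Finset

theorem stmt_14_general
    {Ω : Type*} [MeasureSpace Ω] [IsProbabilityMeasure (ℙ : Measure Ω)]
    (A B Y : Ω → ℝ)
    (hA : Measurable A) (hB : Measurable B) (hY : Measurable Y)
    (hA01 : ℙ {ω | A ω ∈ Set.Ioc (0 : ℝ) 1} = 1)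
    (a b c : ℝ) (ha : 0 < a) (hb : 0 < b) (hc : c < -1)
    (hBtail : Tendsto (fun x : ℝ =>
      (ℙ {ω | B ω > x}).toReal / (a * x ^ c * Real.exp (-b * x))) atTop (nhds 1))
    (f : ℝ → ℝ)
    (htailAB : ∀ y : ℝ, Tendsto (fun x : ℝ =>
      (ℙ {ω | A ω * y + B ω > x}).toReal / (ℙ {ω | B ω > x}).toReal)
      atTop (nhds (f y)))
    (hYindep : IndepFun (fun ω => (A ω, B ω)) Y ℙ)
    (cY : ℝ)
    (hYtail : Tendsto (fun x : ℝ =>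
      (ℙ {ω | Y ω > x}).toReal / (ℙ {ω | B ω > x}).toReal) atTop (nhds cY)) :
    (∫⁻ ω, ENNReal.ofReal (f (Y ω)) ∂ℙ < ⊤) ∧
    Tendsto (fun x : ℝ =>
        (ℙ {ω | A ω * Y ω + B ω > x}).toReal / (ℙ {ω | B ω > x}).toReal)
      atTop (nhds
        (cY * (∫⁻ ω in {ω | A ω = 1}, ENNReal.ofReal (Real.exp (b * B ω)) ∂ℙ).toReal +
          (∫⁻ ω, ENNReal.ofReal (f (Y ω)) ∂ℙ).toReal)) := by
  have hAB : Measurable fun ω => (A ω, B ω) := hA.prodMk hB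
  set ν : Measure (ℝ × ℝ) := (ℙ : Measure Ω).map fun ω => (A ω, B ω)
  set μ : Measure ℝ := (ℙ : Measure Ω).map Y
  have : IsProbabilityMeasure ν := Measure.isProbabilityMeasure_map hAB.aemeasurable
  have : IsProbabilityMeasure μ := Measure.isProbabilityMeasure_map hY.aemeasurable
  have hν : ∀ᵐ p ∂ν, p.1 ∈ Set.Ioc (0 : ℝ) 1 :=
    (ae_map_iff hAB.aemeasurable (measurableSet_Ioc.preimage measurable_fst)).2
      ((ae_iff_measure_eq (hA measurableSet_Ioc).nullMeasurableSet).2 (by rw [hA01, measure_univ]))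
  have hBν : ∀ x, ν.real {p | x < p.2} = (ℙ {ω | B ω > x}).toReal := fun x =>
    map_measureReal_apply hAB (measurableSet_lt measurable_const measurable_snd)
  have hYμ : ∀ x, μ.real (Set.Ioi x) = (ℙ {ω | Y ω > x}).toReal := fun x =>
    map_measureReal_apply hY measurableSet_Ioi
  have hABν : ∀ x y, ν.real {p | x < p.1 * y + p.2} = (ℙ {ω | A ω * y + B ω > x}).toReal :=
    fun x y => map_measureReal_apply hAB (measurableSet_lt measurable_const (by fun_prop))
  obtain ⟨hf_int, hlim⟩ := tendsto_measureReal_prod_lt_mul_add_div (μ := μ) (k := cY) (f := f)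
    ha hb hc hν
    (by simpa only [hBν, expPowTail] using hBtail) (by simpa only [hBν, hYμ] using hYtail)
    (by simpa only [hBν, hABν] using htailAB)
  have hfY : ∫⁻ ω, ENNReal.ofReal (f (Y ω)) ∂ℙ = ∫⁻ y, ENNReal.ofReal (f y) ∂μ :=
    (lintegral_map' hf_int.aemeasurable.ennreal_ofReal hY.aemeasurable).symm
  have hf_nonneg : ∀ y, 0 ≤ f y := fun y =>
    ge_of_tendsto' (htailAB y) fun x => div_nonneg ENNReal.toReal_nonneg ENNReal.toReal_nonneg
  have hexpB : ∫ p in {p | p.1 = 1}, Real.exp (b * p.2) ∂ν =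
      (∫⁻ ω in {ω | A ω = 1}, ENNReal.ofReal (Real.exp (b * B ω)) ∂ℙ).toReal := by
    rw [setIntegral_map (measurableSet_eq_fun measurable_fst measurable_const) (by fun_prop)
      hAB.aemeasurable, integral_eq_lintegral_of_nonneg_ae
        (ae_of_all _ fun _ => (Real.exp_pos _).le) (by fun_prop)]
    rfl
  refine ⟨hfY ▸ hf_int.lintegral_lt_top, ?_⟩
  rw [hfY, ← integral_eq_lintegral_of_nonneg_ae (ae_of_all _ hf_nonneg) hf_int.1, ← hexpB]
  refine hlim.congr fun x => ?_
  rw [← (indepFun_iff_map_prod_eq_prod_map_map hAB.aemeasurable hY.aemeasurable).1 hYindep,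
    map_measureReal_apply (hAB.prodMk hY) (measurableSet_lt_fst_fst_mul_snd_add x), hBν]
  rfl

theorem stmt_14
    {Ω : Type*} [MeasureSpace Ω] [IsProbabilityMeasure (ℙ : Measure Ω)]
    (A B Y : Ω → ℝ)
    (hA : Measurable A) (hB : Measurable B) (hY : Measurable Y)
    (hA01 : ℙ {ω | A ω ∈ Set.Ioc (0 : ℝ) 1} = 1)
    (a b c : ℝ) (ha : 0 < a) (hb : 0 < b) (hc : c < -1)
    (hBtail : Tendsto (fun x : ℝ =>
      (ℙ {ω | B ω > x}).toReal / (a * x ^ c * Real.exp (-b * x))) atTop (nhds 1))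
    (f : ℝ → ℝ) (hf : Measurable f) (hf0 : ∀ y, 0 ≤ f y)
    (htailAB : ∀ y : ℝ, Tendsto (fun x : ℝ =>
      (ℙ {ω | A ω * y + B ω > x}).toReal / (ℙ {ω | B ω > x}).toReal)
      atTop (nhds (f y)))
    (hmomB : ∫⁻ ω in {ω | A ω = 1}, ENNReal.ofReal (Real.exp (b * B ω)) ∂ℙ < 1)
    (hYindep : IndepFun (fun ω => (A ω, B ω)) Y ℙ)
    (cY : ℝ) (hcY : 0 < cY)
    (hYtail : Tendsto (fun x : ℝ =>
      (ℙ {ω | Y ω > x}).toReal / (ℙ {ω | B ω > x}).toReal) atTop (nhds cY)) :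
    (∫⁻ ω, ENNReal.ofReal (f (Y ω)) ∂ℙ < ⊤) ∧
    Tendsto (fun x : ℝ =>
        (ℙ {ω | A ω * Y ω + B ω > x}).toReal / (ℙ {ω | B ω > x}).toReal)
      atTop (nhds
        (cY * (∫⁻ ω in {ω | A ω = 1}, ENNReal.ofReal (Real.exp (b * B ω)) ∂ℙ).toReal +
          (∫⁻ ω, ENNReal.ofReal (f (Y ω)) ∂ℙ).toReal)) :=
  stmt_14_general A B Y hA hB hY hA01 a b c ha hb hc hBtail f htailAB hYindep cY hYtail
end

section
/- Suppose P{A∈(0,1]}=1; P{B>x} ~ a·x^c·e^{−bx} as x→∞ for some a,b>0 and c<−1; and for each y∈ℝ, P{Ay+B>x} ~ f(y)·P{B>x} as x→∞, where f is a nonnegative measurable function. Then f(y) ≤ e^{by} for all y≥0. -/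
open MeasureTheory ProbabilityTheory Filter Finset

theorem stmt_16
    {Ω : Type*} [MeasureSpace Ω] [IsProbabilityMeasure (ℙ : Measure Ω)]
    (A B : Ω → ℝ)
    (hA : Measurable A) (hB : Measurable B)
    (hA01 : ℙ {ω | A ω ∈ Set.Ioc (0 : ℝ) 1} = 1)
    (a b c : ℝ) (ha : 0 < a) (hb : 0 < b) (hc : c < -1)
    (hBtail : Tendsto (fun x : ℝ =>
      (ℙ {ω | B ω > x}).toReal / (a * x ^ c * Real.exp (-b * x))) atTop (nhds 1))
    (f : ℝ → ℝ) (hf : Measurable f) (hf0 : ∀ y, 0 ≤ f y)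
    (htailAB : ∀ y : ℝ, Tendsto (fun x : ℝ =>
      (ℙ {ω | A ω * y + B ω > x}).toReal / (ℙ {ω | B ω > x}).toReal)
      atTop (nhds (f y)))
    : ∀ y : ℝ, 0 ≤ y → f y ≤ Real.exp (b * y) := by
  intro y hy
  set T : ℝ → ℝ := fun x => a * x ^ c * Real.exp (-b * x) with hT
  set pB : ℝ → ℝ := fun x => (ℙ {ω | B ω > x}).toReal with hpB
  -- a.e. A ∈ (0,1]
  have haeA : ∀ᵐ ω ∂(ℙ : Measure Ω), A ω ∈ Set.Ioc (0 : ℝ) 1 := by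
    rw [ae_iff]
    have hmeas : MeasurableSet {ω | A ω ∈ Set.Ioc (0 : ℝ) 1} :=
      hA measurableSet_Ioc
    have h := measure_compl (μ := (ℙ : Measure Ω)) hmeas (measure_ne_top _ _)
    rw [hA01, measure_univ, tsub_self] at h
    simpa [Set.compl_setOf] using h
  -- numerator inequality
  have hnum : ∀ x : ℝ, pB x ≤ pB x := fun x => le_rfl
  have hmono : ∀ x : ℝ, (ℙ {ω | A ω * y + B ω > x}).toReal ≤ pB (x - y) := by
    intro x
    have hle : ℙ {ω | A ω * y + B ω > x} ≤ ℙ {ω | B ω > x - y} := by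
      apply measure_mono_ae
      filter_upwards [haeA] with ω hω hmem
      have h1 : A ω * y ≤ y := by nlinarith [hω.1, hω.2]
      have h2 : x < A ω * y + B ω := hmem
      show x - y < B ω
      linarith
    exact ENNReal.toReal_mono (measure_ne_top _ _) hle
  -- limit of pB (x-y) / pB x
  have hshift : Tendsto (fun x : ℝ => x - y) atTop atTop :=
    tendsto_atTop_add_const_right atTop (-y) tendsto_id
  have h1 : Tendsto (fun x : ℝ => pB (x - y) / T (x - y)) atTop (nhds 1) :=
    hBtail.comp hshift
  have h3 : Tendsto (fun x : ℝ => T x / pB x) atTop (nhds 1) := by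
    have h := hBtail.inv₀ one_ne_zero
    rw [inv_one] at h
    exact h.congr fun x => by rw [inv_div]
  have h2 : Tendsto (fun x : ℝ => T (x - y) / T x) atTop (nhds (Real.exp (b * y))) := by
    have hbase : Tendsto (fun x : ℝ => (x - y) / x) atTop (nhds 1) := by
      have : Tendsto (fun x : ℝ => 1 - y / x) atTop (nhds (1 - 0)) :=
        tendsto_const_nhds.sub (tendsto_const_nhds.div_atTop tendsto_id)
      apply this.congr' ?_ |>.congr (fun x => rfl) |>.mono_right ?_
      · filter_upwards [eventually_gt_atTop (0:ℝ)] with x hx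
        field_simp
      · rw [sub_zero]
    have hrpow : Tendsto (fun x : ℝ => ((x - y) / x) ^ c) atTop (nhds 1) := by
      have := hbase.rpow_const (p := c) (Or.inl one_ne_zero)
      simpa using this
    have hprod : Tendsto (fun x : ℝ => ((x - y) / x) ^ c * Real.exp (b * y)) atTop
        (nhds (1 * Real.exp (b * y))) := hrpow.mul tendsto_const_nhds
    rw [show Real.exp (b * y) = 1 * Real.exp (b * y) by ring]
    apply hprod.congr'
    filter_upwards [eventually_gt_atTop (y + 1), eventually_gt_atTop (1:ℝ)] with x hx hx1
    have hxy : (0:ℝ) < x - y := by linarith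
    have hx0 : (0:ℝ) < x := by linarith
    have hexp : Real.exp (-b * (x - y)) = Real.exp (b * y) * Real.exp (-b * x) := by
      rw [← Real.exp_add]; ring_nf
    simp only [hT]
    rw [Real.div_rpow hxy.le hx0.le, hexp]
    have hxc : (x:ℝ) ^ c ≠ 0 := ne_of_gt (Real.rpow_pos_of_pos hx0 c)
    field_simp
  have hcomb : Tendsto (fun x : ℝ =>
      (pB (x - y) / T (x - y)) * (T (x - y) / T x) * (T x / pB x)) atTop
      (nhds (1 * Real.exp (b * y) * 1)) := (h1.mul h2).mul h3
  have hratio : Tendsto (fun x : ℝ => pB (x - y) / pB x) atTop (nhds (Real.exp (b * y))) := by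
    rw [show Real.exp (b * y) = 1 * Real.exp (b * y) * 1 by ring]
    apply hcomb.congr'
    filter_upwards [eventually_gt_atTop (y + 1), eventually_gt_atTop (1:ℝ)] with x hx hx1
    have hxy : (0:ℝ) < x - y := by linarith
    have hx0 : (0:ℝ) < x := by linarith
    have hT1 : T (x - y) ≠ 0 := by
      have : (0:ℝ) < a * (x - y) ^ c * Real.exp (-b * (x - y)) :=
        mul_pos (mul_pos ha (Real.rpow_pos_of_pos hxy c)) (Real.exp_pos _)
      exact ne_of_gt this
    have hT2 : T x ≠ 0 := by
      have : (0:ℝ) < a * x ^ c * Real.exp (-b * x) :=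
        mul_pos (mul_pos ha (Real.rpow_pos_of_pos hx0 c)) (Real.exp_pos _)
      exact ne_of_gt this
    by_cases hp : pB x = 0
    · simp [hp]
    · field_simp
  -- conclude
  have hineq : ∀ x : ℝ, (ℙ {ω | A ω * y + B ω > x}).toReal / pB x ≤ pB (x - y) / pB x := by
    intro x
    rcases eq_or_lt_of_le (ENNReal.toReal_nonneg : (0:ℝ) ≤ pB x) with h0 | h0
    · have hpz : pB x = 0 := h0.symm
      rw [hpz]
      simp
    · exact div_le_div_of_nonneg_right (hmono x) h0.le
  exact le_of_tendsto_of_tendsto' (htailAB y) hratio hineq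
end
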